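/- arXiv:1807.06376 — 7 statements merged into one kernel-verified Lean document; each statement's English description precedes it below -/
import Mathlib

section
/- Every finite simple graph G satisfies α(G) ≥ v(G)/(d(G)+1), where α(G) is the independence number and d(G) = 2e(G)/v(G) is the average degree. -/
/-!
Caro–Wei: remove a vertex `v` of minimum degree together with its neighbours. Each of the
`d(v) + 1` removed terms of `∑ᵤ 1 / (d(u) + 1)` is at most `1 / (d(v) + 1)`, and the surviving
terms only grow since degrees drop, so the sum loses at most `1` while `v` joins the independent
set. Hence `α(G) ≥ ∑ᵤ 1 / (d(u) + 1)`, which by Cauchy–Schwarz is at least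
`n² / ∑ᵤ (d(u) + 1) = n² / (2e + n) = n / (d(G) + 1)`.
-/

open Finset

namespace SimpleGraph

variable {V : Type*} (G : SimpleGraph V) [DecidableRel G.Adj]

def degreeIn (S : Finset V) (v : V) : ℕ := #{w ∈ S | G.Adj v w}

variable {G}

lemma degreeIn_mono {S T : Finset V} (h : S ⊆ T) (v : V) : G.degreeIn S v ≤ G.degreeIn T v :=
  card_le_card (filter_subset_filter _ h)

lemma degreeIn_univ [Fintype V] (v : V) : G.degreeIn univ v = G.degree v := by
  rw [degreeIn, ← card_neighborFinset_eq_degree, neighborFinset_eq_filter]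

theorem sq_card_div_le_sum_inv_degree_add_one {K : Type*} [Field K] [LinearOrder K]
    [IsStrictOrderedRing K] [Fintype V] :
    (Fintype.card V : K) ^ 2 / (2 * #G.edgeFinset + Fintype.card V)
      ≤ ∑ v, ((G.degree v : K) + 1)⁻¹ := by
  have hsum : ∑ v, ((G.degree v : K) + 1) = 2 * #G.edgeFinset + Fintype.card V := by
    rw [sum_add_distrib, ← Nat.cast_sum, sum_degrees_eq_twice_card_edges]; simp
  simpa [hsum] using sq_sum_div_le_sum_sq_div univ (fun _ ↦ (1 : K))
    (g := fun v ↦ (G.degree v : K) + 1) (fun v _ ↦ by positivity)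

variable [DecidableEq V]

theorem exists_isIndepSet_subset_sum_inv_degreeIn_le {K : Type*} [Field K] [LinearOrder K]
    [IsStrictOrderedRing K] (S : Finset V) :
    ∃ I ⊆ S, G.IsIndepSet (I : Set V) ∧ ∑ v ∈ S, ((G.degreeIn S v : K) + 1)⁻¹ ≤ #I := by
  induction S using Finset.strongInduction with
  | H S ih =>
    rcases S.eq_empty_or_nonempty with rfl | hS
    · exact ⟨∅, subset_rfl, by simp, by simp⟩
    obtain ⟨v, hvS, hmin⟩ := S.exists_min_image (G.degreeIn S) hS
    set N := insert v {w ∈ S | G.Adj v w}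
    have hNS : N ⊆ S := insert_subset hvS (filter_subset _ _)
    have hN_card : #N = G.degreeIn S v + 1 := card_insert_of_notMem (by simp)
    obtain ⟨I, hIS, hI, hsum⟩ := ih (S \ N) (sdiff_ssubset hNS (insert_nonempty _ _))
    have hvI : v ∉ I := fun h ↦ (mem_sdiff.1 (hIS h)).2 (mem_insert_self _ _)
    have hv_nonadj : ∀ w ∈ I, ¬ G.Adj v w := fun w hw hvw ↦
      (mem_sdiff.1 (hIS hw)).2 (mem_insert_of_mem (mem_filter.2 ⟨(mem_sdiff.1 (hIS hw)).1, hvw⟩))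
    refine ⟨insert v I, insert_subset hvS (hIS.trans sdiff_subset), ?_, ?_⟩
    · rw [coe_insert, isIndepSet_iff, Set.pairwise_insert]
      exact ⟨hI, fun w hw _ ↦ ⟨hv_nonadj w hw, fun hwv ↦ hv_nonadj w hw hwv.symm⟩⟩
    have hN_sum : ∑ w ∈ N, ((G.degreeIn S w : K) + 1)⁻¹ ≤ 1 := calc
      _ ≤ ∑ w ∈ N, ((G.degreeIn S v : K) + 1)⁻¹ := sum_le_sum fun w hw ↦ by
            gcongr; exact hmin w (hNS hw)
      _ = 1 := by rw [sum_const, hN_card, nsmul_eq_mul]; push_cast; field_simp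
    have hrest_sum : ∑ w ∈ S \ N, ((G.degreeIn S w : K) + 1)⁻¹
        ≤ ∑ w ∈ S \ N, ((G.degreeIn (S \ N) w : K) + 1)⁻¹ := sum_le_sum fun w _ ↦ by
      gcongr; exact degreeIn_mono sdiff_subset w
    calc ∑ w ∈ S, ((G.degreeIn S w : K) + 1)⁻¹
        = ∑ w ∈ S \ N, ((G.degreeIn S w : K) + 1)⁻¹ + ∑ w ∈ N, ((G.degreeIn S w : K) + 1)⁻¹ :=
          (sum_sdiff hNS).symm
      _ ≤ 1 + #I := by linarith
      _ = #(insert v I) := by rw [card_insert_of_notMem hvI]; push_cast; ring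

end SimpleGraph

theorem stmt3_general {V : Type*} [Fintype V]
    (G : SimpleGraph V) [DecidableRel G.Adj] :
    ∃ s : Finset V, (∀ u ∈ s, ∀ v ∈ s, u ≠ v → ¬ G.Adj u v) ∧
      (Fintype.card V : ℝ) /
        ((2 * G.edgeFinset.card : ℝ) / (Fintype.card V : ℝ) + 1) ≤ (s.card : ℝ) := by
  classical
  obtain ⟨s, -, hs, hsum⟩ := G.exists_isIndepSet_subset_sum_inv_degreeIn_le (K := ℝ) univ
  refine ⟨s, fun u hu v hv huv ↦ hs hu hv huv, ?_⟩
  simp only [SimpleGraph.degreeIn_univ] at hsum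
  set n : ℝ := (Fintype.card V : ℝ)
  have hn : 0 ≤ n := Nat.cast_nonneg _
  calc n / (2 * #G.edgeFinset / n + 1) = n ^ 2 / (2 * #G.edgeFinset + n) := by
        rcases hn.eq_or_lt with hn | hn
        · simp [← hn]
        · field_simp
    _ ≤ ∑ v, ((G.degree v : ℝ) + 1)⁻¹ := G.sq_card_div_le_sum_inv_degree_add_one
    _ ≤ #s := hsum

/-- Turán-type bound: every finite simple graph `G` on at least one vertex has an
independent set of size at least `v(G) / (d(G) + 1)` where `d(G) = 2 e(G) / v(G)`. -/
theorem stmt3 {V : Type*} [Fintype V] [DecidableEq V] [Nonempty V]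
    (G : SimpleGraph V) [DecidableRel G.Adj] :
    ∃ s : Finset V, (∀ u ∈ s, ∀ v ∈ s, u ≠ v → ¬ G.Adj u v) ∧
      (Fintype.card V : ℝ) /
        ((2 * G.edgeFinset.card : ℝ) / (Fintype.card V : ℝ) + 1) ≤ (s.card : ℝ) :=
  stmt3_general G
end

section
/- Fix D ∈ ℕ. For any finite graph G with minimum degree δ, either G contains, starting from every vertex, a path of length at least D, or G has a subgraph H with at most D vertices and at least δ(δ+1)/2 edges. -/
/-!
Suppose some vertex `v` starts no path of length `D`, and let `P` be a longest path from `v`;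
it has at most `D` vertices. By maximality every neighbour of the end `u` of `P` lies on `P`.
For each neighbour `w` of `u`, the Pósa rotation at `w` yields another longest path from `v` on
the same vertex set, ending at the successor of `w`; so at least `δ` vertices have their whole
neighbourhood inside `V(P)`. For a set `W` of `δ` of them, the ordered adjacent pairs in `V(P)`
with first entry in `W` number at least `δ²`, and since each `w ∈ W` has a neighbour outside `W`
there are at least `δ` more pairs with only the second entry in `W`.
-/

open Finset

namespace SimpleGraph

variable {V : Type*} {G : SimpleGraph V}

namespace Walk

variable {u v : V}

def IsLongestPathFrom (p : G.Walk v u) : Prop :=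
  p.IsPath ∧ ∀ x (q : G.Walk v x), q.IsPath → q.length ≤ p.length

lemma exists_isLongestPathFrom [Finite V] (v : V) :
    ∃ (u : V) (p : G.Walk v u), p.IsLongestPathFrom := by
  have : Fintype V := Fintype.ofFinite V
  let S : Set ℕ := {n | ∃ (u : V) (p : G.Walk v u), p.IsPath ∧ p.length = n}
  have hbdd : BddAbove S := ⟨Fintype.card V, fun n ⟨_, _, hp, hn⟩ ↦ hn ▸ hp.length_lt.le⟩
  obtain ⟨u, p, hp, hlen⟩ : sSup S ∈ S := Nat.sSup_mem ⟨0, v, nil, .nil, rfl⟩ hbdd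
  exact ⟨u, p, hp, fun x q hq ↦ hlen ▸ le_csSup hbdd ⟨x, q, hq, rfl⟩⟩

lemma IsLongestPathFrom.mem_support_of_adj {p : G.Walk v u} (hp : p.IsLongestPathFrom) {y : V}
    (hy : G.Adj u y) : y ∈ p.support := by
  by_contra hy'
  have := hp.2 y _ (hp.1.concat hy' hy)
  rw [length_concat] at this
  omega

lemma IsLongestPathFrom.of_perm {p : G.Walk v u} (hp : p.IsLongestPathFrom) {x : V}
    {q : G.Walk v x} (hsupp : q.support.Perm p.support) (hlen : q.length = p.length) :
    q.IsLongestPathFrom :=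
  ⟨.mk' (hsupp.nodup_iff.mpr hp.1.support_nodup), hlen ▸ hp.2⟩

/-- Pósa rotation: if the `i`-th vertex `w` of `p` is adjacent to the end `u`, replacing the
edge from `w` to its successor by `wu` and reversing the final segment gives a walk with the same
vertices and length that ends at the successor of `w`. -/
lemma exists_rotation_of_adj_getVert (p : G.Walk v u) {i : ℕ} (hadj : G.Adj (p.getVert i) u) :
    ∃ q : G.Walk v (p.getVert (i + 1)), q.support.Perm p.support ∧ q.length = p.length := by
  obtain ⟨x, hwx, d, hd⟩ := exists_eq_cons_of_ne hadj.ne (p.drop i)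
  have hxi : x = p.getVert (i + 1) := by
    simpa [hd] using p.drop_getVert i 1
  subst hxi
  refine ⟨(p.take i).append (cons hadj d.reverse), ?_, ?_⟩
  · conv_rhs => rw [← p.append_take_drop_eq i, hd]
    simpa [support_append] using (List.reverse_perm d.support).append_left (p.take i).support
  · conv_rhs => rw [← p.append_take_drop_eq i, hd]
    simp [length_append]

lemma IsLongestPathFrom.exists_closed_endpoints [DecidableEq V] [DecidableRel G.Adj]
    [Fintype (G.neighborSet u)]
    {p : G.Walk v u} (hp : p.IsLongestPathFrom) :
    ∃ W : Finset V, G.degree u ≤ #W ∧ ∀ w ∈ W, w ∈ p.support ∧ ∀ y, G.Adj w y → y ∈ p.support := by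
  set I := {i ∈ range p.length | G.Adj (p.getVert i) u}
  have hI : ∀ i ∈ I, i < p.length ∧ G.Adj (p.getVert i) u := fun i hi ↦ by simpa [I] using hi
  refine ⟨I.image (fun i ↦ p.getVert (i + 1)), ?_, ?_⟩
  · have hinj : Set.InjOn (fun i ↦ p.getVert (i + 1)) I := fun i hi j hj hij ↦ by
      have := hp.1.getVert_injOn (by simp; grind) (by simp; grind) hij
      omega
    have hnbr : G.neighborFinset u ⊆ I.image p.getVert := fun y hy ↦ by
      rw [mem_neighborFinset] at hy
      obtain ⟨i, rfl, hi⟩ := mem_support_iff_exists_getVert.mp (hp.mem_support_of_adj hy)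
      have : i ≠ p.length := by rintro rfl; exact hy.ne p.getVert_length.symm
      exact mem_image.mpr ⟨i, by simp [I, hy.symm]; omega, rfl⟩
    rw [card_image_of_injOn hinj, ← card_neighborFinset_eq_degree]
    exact (card_le_card hnbr).trans card_image_le
  · simp only [mem_image]
    rintro _ ⟨i, hi, rfl⟩
    obtain ⟨q, hperm, hlen⟩ := p.exists_rotation_of_adj_getVert (hI i hi).2
    have hq := hp.of_perm hperm hlen
    exact ⟨hperm.mem_iff.mp q.end_mem_support,
      fun y hy ↦ hperm.mem_iff.mp (hq.mem_support_of_adj hy)⟩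

end Walk

variable [DecidableEq V]

lemma exists_adj_notMem_of_card_le_degree {W : Finset V} {w : V} [Fintype (G.neighborSet w)]
    (hw : w ∈ W) (h : #W ≤ G.degree w) : ∃ y, G.Adj w y ∧ y ∉ W := by
  by_contra! hsub
  have hss : G.neighborFinset w ⊆ W.erase w := fun y hy ↦ by
    rw [mem_neighborFinset] at hy
    exact mem_erase.mpr ⟨hy.ne', hsub y hy⟩
  have := card_le_card hss
  rw [card_neighborFinset_eq_degree, card_erase_of_mem hw] at this
  have := card_pos.mpr ⟨w, hw⟩
  omega

variable [Fintype V] [DecidableRel G.Adj]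

lemma sum_degree_le_card_adj_pairs (W : Finset V) :
    ∑ w ∈ W, G.degree w ≤ #{q : V × V | G.Adj q.1 q.2 ∧ q.1 ∈ W} := by
  rw [card_eq_sum_card_fiberwise (f := Prod.fst) (t := W) fun _ hq ↦ (mem_filter.mp hq).2.2]
  refine sum_le_sum fun w _ ↦ ?_
  rw [← card_neighborFinset_eq_degree]
  exact card_le_card_of_injOn (fun y ↦ (w, y)) (fun y hy ↦ by simp_all)
    fun _ _ _ _ h ↦ (Prod.ext_iff.mp h).2

lemma mul_succ_le_card_adj_pairs {s W : Finset V} {m : ℕ} (hW : #W = m)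
    (hdeg : ∀ w ∈ W, m ≤ G.degree w) (hclosed : ∀ w ∈ W, w ∈ s ∧ ∀ y, G.Adj w y → y ∈ s) :
    m * (m + 1) ≤ #{q : V × V | G.Adj q.1 q.2 ∧ q.1 ∈ s ∧ q.2 ∈ s} := by
  set A : Finset (V × V) := {q | G.Adj q.1 q.2 ∧ q.1 ∈ W}
  set B : Finset (V × V) := {q | G.Adj q.1 q.2 ∧ q.1 ∉ W ∧ q.2 ∈ W}
  have hA : m * m ≤ #A := calc
    m * m = #W • m := by rw [hW, smul_eq_mul]
    _ ≤ ∑ w ∈ W, G.degree w := card_nsmul_le_sum _ _ _ hdeg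
    _ ≤ #A := sum_degree_le_card_adj_pairs W
  have hB : m ≤ #B := hW ▸ card_le_card_of_surjOn Prod.snd fun w hw ↦ by
    obtain ⟨y, hy, hyW⟩ := exists_adj_notMem_of_card_le_degree hw (hW ▸ hdeg w hw)
    exact ⟨(y, w), by simp [B, hy.symm, hyW, mem_coe.mp hw], rfl⟩
  have hAB : Disjoint A B := disjoint_filter.mpr fun _ _ hA hB ↦ hB.2.1 hA.2
  have hsub : A ∪ B ⊆ ({q | G.Adj q.1 q.2 ∧ q.1 ∈ s ∧ q.2 ∈ s} : Finset (V × V)) := fun q hq ↦ by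
    simp only [A, B, mem_union, mem_filter_univ] at hq ⊢
    rcases hq with ⟨hadj, hq1⟩ | ⟨hadj, -, hq2⟩
    · exact ⟨hadj, (hclosed _ hq1).1, (hclosed _ hq1).2 _ hadj⟩
    · exact ⟨hadj, (hclosed _ hq2).2 _ hadj.symm, (hclosed _ hq2).1⟩
  calc m * (m + 1) = m * m + m := by ring
    _ ≤ #A + #B := add_le_add hA hB
    _ = #(A ∪ B) := (card_union_of_disjoint hAB).symm
    _ ≤ _ := card_le_card hsub

end SimpleGraph

theorem stmt8_general {V : Type*} [Fintype V] [DecidableEq V]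
    (G : SimpleGraph V) [DecidableRel G.Adj] (D : ℕ) :
    (∀ v : V, ∃ (u : V) (p : G.Walk v u), p.IsPath ∧ D ≤ p.length) ∨
    (∃ s : Finset V, s.card ≤ D ∧
      G.minDegree * (G.minDegree + 1) ≤
        (Finset.univ.filter (fun q : V × V => G.Adj q.1 q.2 ∧ q.1 ∈ s ∧ q.2 ∈ s)).card) := by
  refine or_iff_not_imp_left.mpr fun hshort ↦ ?_
  push Not at hshort
  obtain ⟨v, hv⟩ := hshort
  obtain ⟨u, p, hp⟩ := SimpleGraph.Walk.exists_isLongestPathFrom (G := G) v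
  obtain ⟨W, hdegW, hclosed⟩ := hp.exists_closed_endpoints
  obtain ⟨W', hW'W, hW'⟩ := exists_subset_card_eq ((G.minDegree_le_degree u).trans hdegW)
  refine ⟨p.support.toFinset, ?_, SimpleGraph.mul_succ_le_card_adj_pairs hW'
    (fun w _ ↦ G.minDegree_le_degree w) fun w hw ↦ by simpa using hclosed w (hW'W hw)⟩
  calc p.support.toFinset.card ≤ p.support.length := List.toFinset_card_le _
    _ = p.length + 1 := p.length_support
    _ ≤ D := hv u p hp.1

/-- Fix `D : ℕ`. Any finite graph `G` with minimum degree `δ` either contains a path of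
length at least `D` starting at every vertex, or has a subgraph `H` on at most `D` vertices
with at least `δ(δ+1)/2` edges (stated via ordered adjacent pairs inside a vertex set `s`:
their number is twice the number of edges of the induced subgraph). -/
theorem stmt8 {V : Type*} [Fintype V] [DecidableEq V] [Nonempty V]
    (G : SimpleGraph V) [DecidableRel G.Adj] (D : ℕ) :
    (∀ v : V, ∃ (u : V) (p : G.Walk v u), p.IsPath ∧ D ≤ p.length) ∨
    (∃ s : Finset V, s.card ≤ D ∧
      G.minDegree * (G.minDegree + 1) ≤
        (Finset.univ.filter (fun q : V × V => G.Adj q.1 q.2 ∧ q.1 ∈ s ∧ q.2 ∈ s)).card) :=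
  stmt8_general G D
end

section
/- Let m, d, s ∈ ℕ with m ≥ 3d. Suppose G is a graph whose vertex set is the disjoint union of independent sets I₁,…,I_s each of size m, and suppose α(G) < v(G)/(12d). Then there exist indices i₀, i₁, …, i_d ∈ [s], pairwise distinct, and a matching of size d in G with exactly one edge between I_{i_{j-1}} and I_{i_j} for each j ∈ [d]. -/
/-!
Grow a matching along parts greedily: from the last part visited, use a vertex not yet covered that
has a neighbour in an unvisited part. If there is no matching along `d + 1` parts, this growth
inside any set `R` of parts gets stuck after visiting a set `P` of at most `d` parts, and then at
least `m - d` vertices of the last part have no neighbours in the parts of `R \ P`. Deleting `P`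
from `R` and collecting these vertices, over and over, builds an independent set of size at least
`(m - d) s / d`, which for `m ≥ 3d` contradicts `α(G) < ms / (12d)`.
-/

open Finset Function

namespace SimpleGraph

variable {V : Type*} {G : SimpleGraph V} {s m d : ℕ} {I : Fin s → Finset V}

/-- The edges `a j b j` form a matching along the distinct parts `I (idx 0), …, I (idx k)`, the
`j`-th edge going from `I (idx j)` to `I (idx (j + 1))`. Vertices in different parts are distinct
anyway; `left_ne_right` covers the ends `a (j + 1)` and `b j`, which share a part. -/
structure IsMatchingAlong (G : SimpleGraph V) (I : Fin s → Finset V) {k : ℕ}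
    (idx : Fin (k + 1) → Fin s) (a b : Fin k → V) : Prop where
  injective : Injective idx
  adj : ∀ j, G.Adj (a j) (b j)
  mem_left : ∀ j, a j ∈ I (idx j.castSucc)
  mem_right : ∀ j, b j ∈ I (idx j.succ)
  left_ne_right : ∀ j l, a j ≠ b l

namespace IsMatchingAlong

theorem nil (i : Fin s) : IsMatchingAlong G I (fun _ : Fin 1 => i) Fin.elim0 Fin.elim0 where
  injective := injective_of_subsingleton (α := Fin 1) _
  adj j := j.elim0
  mem_left j := j.elim0
  mem_right j := j.elim0
  left_ne_right j := j.elim0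

variable {k : ℕ} {idx : Fin (k + 1) → Fin s} {a b : Fin k → V}

theorem snoc (h : IsMatchingAlong G I idx a b) (hI : Pairwise (Disjoint on I)) {i : Fin s}
    {u v : V} (hi : i ∉ Set.range idx) (hu : u ∈ I (idx (Fin.last k))) (hub : u ∉ Set.range b)
    (hv : v ∈ I i) (huv : G.Adj u v) :
    IsMatchingAlong G I (Fin.snoc idx i) (Fin.snoc a u) (Fin.snoc b v) where
  injective := Fin.snoc_injective_of_injective h.injective hi
  adj := Fin.lastCases (by simpa) fun j => by simpa using h.adj j
  mem_left := Fin.lastCases (by simpa) fun j => by simpa using h.mem_left j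
  mem_right := Fin.lastCases (by simpa) fun j => by
    rw [Fin.snoc_castSucc, Fin.succ_castSucc, Fin.snoc_castSucc]; exact h.mem_right j
  left_ne_right := by
    refine Fin.lastCases (Fin.lastCases ?_ fun l => ?_) fun j => Fin.lastCases ?_ fun l => ?_
    · simpa using huv.ne
    · simpa using fun h => hub ⟨l, h.symm⟩
    · simpa using disjoint_iff_ne.mp (hI fun h => hi ⟨_, h⟩) _ (h.mem_left j) _ hv
    · simpa using h.left_ne_right j l

theorem pairwise_ne (h : IsMatchingAlong G I idx a b) (hI : Pairwise (Disjoint on I))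
    {j l : Fin k} (hjl : j ≠ l) : a j ≠ a l ∧ a j ≠ b l ∧ b j ≠ b l :=
  ⟨disjoint_iff_ne.mp (hI (h.injective.ne ((Fin.castSucc_injective _).ne hjl))) _
      (h.mem_left j) _ (h.mem_left l),
    h.left_ne_right j l,
    disjoint_iff_ne.mp (hI (h.injective.ne ((Fin.succ_injective _).ne hjl))) _
      (h.mem_right j) _ (h.mem_right l)⟩

end IsMatchingAlong

variable [DecidableEq V]

theorem exists_stuck_of_isMatchingAlong (hI : Pairwise (Disjoint on I))
    (hcard : ∀ i, #(I i) = m)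
    (hno : ∀ (idx : Fin (d + 1) → Fin s) (a b : Fin d → V), ¬ IsMatchingAlong G I idx a b)
    {R : Finset (Fin s)} {k : ℕ} (hk : k ≤ d) {idx : Fin (k + 1) → Fin s} {a b : Fin k → V}
    (h : IsMatchingAlong G I idx a b) (hR : ∀ j, idx j ∈ R) :
    ∃ P ⊆ R, P.Nonempty ∧ #P ≤ d ∧ ∃ e ∈ P, ∃ S ⊆ I e, m - d ≤ #S ∧
      ∀ i ∈ R \ P, ∀ u ∈ S, ∀ v ∈ I i, ¬ G.Adj u v := by
  have hkd : k < d := hk.lt_of_ne (by rintro rfl; exact hno idx a b h)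
  by_cases hext : ∃ i ∈ R \ univ.image idx, ∃ u ∈ I (idx (Fin.last k)) \ univ.image b,
      ∃ v ∈ I i, G.Adj u v
  · obtain ⟨i, hi, u, hu, v, hv, huv⟩ := hext
    simp only [mem_sdiff, mem_image, mem_univ, true_and] at hi hu
    exact exists_stuck_of_isMatchingAlong hI hcard hno hkd (h.snoc hI hi.2 hu.1 hu.2 hv huv)
      (Fin.lastCases (by simpa using hi.1) (by simpa using hR))
  · push Not at hext
    have hb : #(univ.image b) ≤ k := card_image_le.trans (by simp)
    refine ⟨univ.image idx, ?_, univ_nonempty.image _, card_image_le.trans (by simpa using hkd),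
      idx (Fin.last k), mem_image_of_mem _ (mem_univ _), _, sdiff_subset, ?_, hext⟩
    · simpa [subset_iff] using hR
    · have := le_card_sdiff (univ.image b) (I (idx (Fin.last k)))
      rw [hcard] at this
      omega
termination_by d - k

theorem exists_isIndepSet_of_forall_stuck (hI : Pairwise (Disjoint on I))
    (hindep : ∀ i, G.IsIndepSet (I i : Set V))
    (hstuck : ∀ R : Finset (Fin s), R.Nonempty → ∃ P ⊆ R, P.Nonempty ∧ #P ≤ d ∧
      ∃ e ∈ P, ∃ S ⊆ I e, m - d ≤ #S ∧ ∀ i ∈ R \ P, ∀ u ∈ S, ∀ v ∈ I i, ¬ G.Adj u v)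
    (R : Finset (Fin s)) :
    ∃ T ⊆ R.biUnion I, G.IsIndepSet (T : Set V) ∧ (m - d) * #R ≤ d * #T := by
  induction R using Finset.strongInduction with
  | H R ih =>
  obtain rfl | hR := R.eq_empty_or_nonempty
  · exact ⟨∅, by simp⟩
  obtain ⟨P, hPR, hP, hPd, e, heP, S, hSe, hS, hSR⟩ := hstuck R hR
  obtain ⟨T, hTR, hT, hTcard⟩ := ih (R \ P) (sdiff_ssubset hPR hP)
  have hST : ∀ u ∈ S, ∀ v ∈ T, u ≠ v ∧ ¬ G.Adj u v := by
    intro u hu v hv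
    obtain ⟨i, hi, hvi⟩ := mem_biUnion.mp (hTR hv)
    have hei : e ≠ i := fun hei => (mem_sdiff.mp hi).2 (hei ▸ heP)
    exact ⟨disjoint_iff_ne.mp (hI hei) _ (hSe hu) _ hvi, hSR i hi u hu v hvi⟩
  refine ⟨T ∪ S, union_subset (hTR.trans (biUnion_subset_biUnion_of_subset_left _ sdiff_subset))
    (hSe.trans (subset_biUnion_of_mem I (hPR heP))), ?_, ?_⟩
  · rw [coe_union, IsIndepSet, Set.pairwise_union]
    exact ⟨hT, (hindep e).mono hSe, fun v hv u hu _ =>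
      ⟨fun h => (hST u hu v hv).2 h.symm, (hST u hu v hv).2⟩⟩
  · have hdisj : Disjoint T S := disjoint_right.mpr fun u hu hv => (hST u hu u hv).1 rfl
    calc (m - d) * #R = (m - d) * #(R \ P) + (m - d) * #P := by
          rw [← mul_add, card_sdiff_add_card_eq_card hPR]
      _ ≤ d * #T + #S * d := add_le_add hTcard (Nat.mul_le_mul hS hPd)
      _ = d * #(T ∪ S) := by rw [card_union_of_disjoint hdisj]; ring

end SimpleGraph

open SimpleGraph

/-- Let `m ≥ 3d` and let `G` be a graph whose vertex set is partitioned into independent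
sets `I 1, …, I s`, each of size `m`, with `α(G) < v(G)/(12 d)`. Then there are distinct
indices `i 0, …, i d` and a matching of size `d` with exactly one edge between
`I (i (j-1))` and `I (i j)` for each `j ∈ [d]`. -/
theorem stmt9 {V : Type*} [Fintype V] [DecidableEq V] (G : SimpleGraph V)
    (m d s : ℕ) (hmd : 3 * d ≤ m)
    (I : Fin s → Finset V)
    (hdisj : ∀ i j, i ≠ j → Disjoint (I i) (I j))
    (hcover : ∀ v : V, ∃ i, v ∈ I i)
    (hcard : ∀ i, (I i).card = m)
    (hindep : ∀ i, ∀ u ∈ I i, ∀ v ∈ I i, ¬ G.Adj u v)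
    (hα : ∀ t : Finset V, (∀ u ∈ t, ∀ v ∈ t, u ≠ v → ¬ G.Adj u v) →
        (t.card : ℝ) < (Fintype.card V : ℝ) / (12 * d)) :
    ∃ idx : Fin (d + 1) → Fin s, Function.Injective idx ∧
      ∃ a b : Fin d → V, (∀ j, G.Adj (a j) (b j)) ∧
        (∀ j : Fin d, a j ∈ I (idx j.castSucc) ∧ b j ∈ I (idx j.succ)) ∧
        (∀ j k : Fin d, j ≠ k → a j ≠ a k ∧ a j ≠ b k ∧ b j ≠ b k) := by
  by_contra hno
  have hI : Pairwise (Disjoint on I) := fun i j => hdisj i j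
  obtain ⟨T, -, hT, hTcard⟩ := exists_isIndepSet_of_forall_stuck hI
    (fun i u hu v hv _ => hindep i u hu v hv)
    (fun R ⟨e, he⟩ => exists_stuck_of_isMatchingAlong hI hcard
      (fun idx a b h => hno ⟨idx, h.injective, a, b, h.adj,
        fun j => ⟨h.mem_left j, h.mem_right j⟩, fun _ _ => h.pairwise_ne hI⟩)
      d.zero_le (.nil e) fun _ => he) univ
  rw [card_univ, Fintype.card_fin] at hTcard
  have hV : Fintype.card V ≤ s * m := by
    calc Fintype.card V ≤ #(univ.biUnion I) :=
          card_le_card fun v _ => mem_biUnion.mpr (by simpa using hcover v)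
      _ ≤ s * m := by simpa using card_biUnion_le_card_mul univ I m fun i _ => (hcard i).le
  have hTα := hα T fun u hu v hv => hT hu hv
  obtain rfl | hd := d.eq_zero_or_pos
  · simp only [CharP.cast_eq_zero, mul_zero, div_zero] at hTα
    exact hTα.not_ge (Nat.cast_nonneg _)
  rw [lt_div_iff₀ (by positivity)] at hTα
  have hTV : #T * (12 * d) < s * m := by
    have hV' : (Fintype.card V : ℝ) ≤ s * m := by exact_mod_cast hV
    exact_mod_cast hTα.trans_le hV'
  have hm : s * m ≤ s * (12 * (m - d)) := Nat.mul_le_mul_left s (by omega)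
  nlinarith
end

section
/- Any graph G on v(G) ≥ 3 vertices with minimum degree δ(G) ≥ v(G)/2 contains a Hamilton cycle. -/
/-!
Take a longest path `p` from `u` to `v`. All neighbours of `u` and of `v` lie on `p`, and since
`deg u + deg v ≥ n > length p`, some index `i` has `u ~ pᵢ₊₁` and `v ~ pᵢ`; then
`u → ⋯ → pᵢ → v → ⋯ → pᵢ₊₁ → u` is a cycle on the vertices of `p`. Any two non-adjacent vertices
have a common neighbour, so if this cycle missed a vertex, some vertex off the cycle would be
adjacent to it, and opening the cycle there would give a path longer than `p`.
-/

open Finset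
open scoped List

namespace SimpleGraph

variable {V : Type*} {G : SimpleGraph V}

theorem exists_adj_adj_of_card_le_degree_add_degree [Fintype V] [DecidableRel G.Adj] {u w : V}
    (huw : ¬G.Adj u w) (hdeg : Fintype.card V ≤ G.degree u + G.degree w) :
    ∃ x, G.Adj u x ∧ G.Adj w x := by
  classical
  by_contra! h
  have hdisj : Disjoint (G.neighborFinset u) (G.neighborFinset w) :=
    Finset.disjoint_left.mpr fun x hu hw =>
      h x ((mem_neighborFinset ..).mp hu) ((mem_neighborFinset ..).mp hw)
  have hsub : G.neighborFinset u ∪ G.neighborFinset w ⊆ univ.erase u := by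
    intro x hx
    rw [mem_union, mem_neighborFinset, mem_neighborFinset] at hx
    rcases hx with hx | hx
    · exact mem_erase.mpr ⟨hx.ne', mem_univ x⟩
    · exact mem_erase.mpr ⟨fun hxu => huw (hxu ▸ hx.symm), mem_univ x⟩
  have := card_le_card hsub
  rw [card_union_of_disjoint hdisj, card_neighborFinset_eq_degree, card_neighborFinset_eq_degree,
    card_erase_of_mem (mem_univ u), card_univ] at this
  have := Fintype.card_pos_iff.mpr ⟨u⟩
  omega

theorem exists_adj_of_mem_of_notMem [Fintype V] [DecidableRel G.Adj]
    (hdeg : ∀ x y, x ≠ y → ¬G.Adj x y → Fintype.card V ≤ G.degree x + G.degree y)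
    {s : Set V} {a w : V} (ha : a ∈ s) (hw : w ∉ s) : ∃ z ∉ s, ∃ y ∈ s, G.Adj z y := by
  by_cases hwa : G.Adj w a
  · exact ⟨w, hw, a, ha, hwa⟩
  obtain ⟨x, hwx, hax⟩ :=
    exists_adj_adj_of_card_le_degree_add_degree hwa (hdeg w a (ne_of_mem_of_not_mem ha hw).symm hwa)
  by_cases hx : x ∈ s
  · exact ⟨w, hw, x, hx, hwx⟩
  · exact ⟨x, hx, a, ha, hax.symm⟩

theorem exists_isPath_forall_length_le [Fintype V] [Nonempty V] (G : SimpleGraph V) :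
    ∃ (u v : V) (p : G.Walk u v), p.IsPath ∧
      ∀ (u' v' : V) (q : G.Walk u' v'), q.IsPath → q.length ≤ p.length := by
  classical
  let P (m : ℕ) : Prop := ∃ (u v : V) (p : G.Walk u v), p.IsPath ∧ p.length = m
  have hP0 : P 0 := ⟨Classical.arbitrary V, _, .nil, .nil, rfl⟩
  obtain ⟨u, v, p, hp, hlen⟩ := Nat.findGreatest_spec (Nat.zero_le (Fintype.card V)) hP0
  exact ⟨u, v, p, hp, fun u' v' q hq =>
    hlen ▸ Nat.le_findGreatest hq.length_lt.le ⟨u', v', q, hq, rfl⟩⟩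

namespace Walk

variable {u v : V}

theorem IsPath.isCycle_cons {p : G.Walk v u} (hp : p.IsPath) (h : G.Adj u v)
    (hlen : 2 ≤ p.length) : (cons h p).IsCycle := by
  refine (cons_isCycle_iff p h).mpr ⟨hp, fun he => ?_⟩
  have := hp.length_eq_one_of_mem_edges (Sym2.eq_swap ▸ he)
  omega

theorem IsPath.card_filter_getVert_add_mem [DecidableEq V] {p : G.Walk u v} (hp : p.IsPath)
    {m k : ℕ} (hmk : m + k ≤ p.length + 1) {s : Finset V}
    (hs : ∀ x ∈ s, ∃ i < m, p.getVert (i + k) = x) :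
    #{i ∈ range m | p.getVert (i + k) ∈ s} = #s := by
  refine card_nbij (fun i => p.getVert (i + k)) (fun i hi => (mem_filter.mp hi).2) ?_ ?_
  · intro i hi j hj hij
    simp only [coe_filter, mem_range, Set.mem_ofPred_eq] at hi hj
    have := hp.getVert_injOn (by simp only [Set.mem_ofPred_eq]; omega)
      (by simp only [Set.mem_ofPred_eq]; omega) hij
    omega
  · intro x hx
    obtain ⟨i, hi, rfl⟩ := hs x hx
    exact ⟨i, by simpa [hi] using hx, rfl⟩

theorem IsPath.card_filter_adj_getVert_succ [Fintype V] [DecidableRel G.Adj] {p : G.Walk u v}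
    (hp : p.IsPath) (hu : ∀ x, G.Adj u x → x ∈ p.support) :
    #{i ∈ range p.length | G.Adj u (p.getVert (i + 1))} = G.degree u := by
  classical
  rw [← card_neighborFinset_eq_degree, ← hp.card_filter_getVert_add_mem le_rfl]
  · simp only [mem_neighborFinset]
  intro x hx
  rw [mem_neighborFinset] at hx
  obtain ⟨j, rfl, hj⟩ := mem_support_iff_exists_getVert.mp (hu x hx)
  have hj0 : j ≠ 0 := by rintro rfl; exact hx.ne (getVert_zero p).symm
  exact ⟨j - 1, by omega, by rw [Nat.sub_add_cancel (Nat.pos_of_ne_zero hj0)]⟩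

theorem IsPath.card_filter_adj_getVert [Fintype V] [DecidableRel G.Adj] {p : G.Walk u v}
    (hp : p.IsPath) (hv : ∀ x, G.Adj v x → x ∈ p.support) :
    #{i ∈ range p.length | G.Adj v (p.getVert i)} = G.degree v := by
  classical
  rw [← card_neighborFinset_eq_degree,
    ← hp.card_filter_getVert_add_mem (m := p.length) (k := 0) (by omega)]
  · simp only [mem_neighborFinset, add_zero]
  intro x hx
  rw [mem_neighborFinset] at hx
  obtain ⟨j, rfl, hj⟩ := mem_support_iff_exists_getVert.mp (hv x hx)
  have hjl : j ≠ p.length := by rintro rfl; exact hx.ne (getVert_length p).symm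
  exact ⟨j, by omega, rfl⟩

theorem IsPath.degree_le_length [Fintype V] [DecidableRel G.Adj] {p : G.Walk u v}
    (hp : p.IsPath) (hu : ∀ x, G.Adj u x → x ∈ p.support) : G.degree u ≤ p.length := by
  rw [← hp.card_filter_adj_getVert_succ hu]
  exact (card_filter_le _ _).trans (card_range _).le

theorem IsPath.exists_adj_getVert_succ_adj_getVert [Fintype V] [DecidableRel G.Adj]
    {p : G.Walk u v} (hp : p.IsPath) (hu : ∀ x, G.Adj u x → x ∈ p.support)
    (hv : ∀ x, G.Adj v x → x ∈ p.support)
    (hdeg : Fintype.card V ≤ G.degree u + G.degree v) :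
    ∃ i < p.length, G.Adj u (p.getVert (i + 1)) ∧ G.Adj v (p.getVert i) := by
  obtain ⟨i, hi⟩ := inter_nonempty_of_card_lt_card_add_card
    (filter_subset (fun i => G.Adj u (p.getVert (i + 1))) (range p.length))
    (filter_subset (fun i => G.Adj v (p.getVert i)) _) <| by
      rw [hp.card_filter_adj_getVert_succ hu, hp.card_filter_adj_getVert hv, card_range]
      exact hp.length_lt.trans_le hdeg
  simp only [mem_inter, mem_filter, mem_range] at hi
  exact ⟨i, hi.1.1, hi.1.2, hi.2.2⟩

theorem IsPath.exists_isCycle_of_adj_getVert_succ_adj_getVert {p : G.Walk u v} (hp : p.IsPath)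
    {i : ℕ} (hi : i < p.length) (h2 : 2 ≤ p.length) (hu : G.Adj u (p.getVert (i + 1)))
    (hv : G.Adj v (p.getVert i)) :
    ∃ c : G.Walk u u, c.IsCycle ∧ c.length = p.length + 1 ∧
      ∀ x, x ∈ c.support ↔ x ∈ p.support := by
  let q := (p.drop (i + 1)).append (cons hv (p.take i).reverse)
  have hsupp : q.support ~ p.support := calc
    q.support = p.support.drop (i + 1) ++ (p.support.take (i + 1)).reverse := by
      simp [q, support_append, support_take, Nat.min_eq_left hi]
    _ ~ p.support.drop (i + 1) ++ p.support.take (i + 1) := (List.reverse_perm _).append_left _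
    _ ~ p.support := List.perm_append_comm.trans (by rw [List.take_append_drop])
  have hq : q.IsPath := IsPath.mk' (hsupp.nodup_iff.mpr hp.support_nodup)
  have hlen : q.length = p.length := by simp [q]; omega
  refine ⟨cons hu q, hq.isCycle_cons hu (hlen ▸ h2), by simp [hlen], fun x => ?_⟩
  rw [support_cons, List.mem_cons, hsupp.mem_iff]
  exact ⟨fun h => h.elim (fun hx => hx ▸ p.start_mem_support) id, Or.inr⟩

theorem IsCycle.exists_isPath_length_eq [DecidableEq V] {c : G.Walk u u} (hc : c.IsCycle)
    {y z : V} (hy : y ∈ c.support) (hz : z ∉ c.support) (hzy : G.Adj z y) :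
    ∃ (w : V) (q : G.Walk z w), q.IsPath ∧ q.length = c.length := by
  let r := (c.rotate y hy).tail.reverse
  have hr : r.IsPath := (hc.rotate hy).isPath_tail.reverse
  have hzr : z ∉ r.support := fun hzr => by
    rw [support_reverse, List.mem_reverse,
      support_tail_of_not_nil _ (hc.rotate hy).not_nil] at hzr
    exact hz <| (mem_support_rotate_iff ..).mp (List.mem_of_mem_tail hzr)
  refine ⟨_, cons hzy r, cons_isPath_iff _ _ |>.mpr ⟨hr, hzr⟩, ?_⟩
  have := hc.three_le_length
  simp [r]
  omega

theorem IsPath.mem_support_of_adj_of_forall_length_le {p : G.Walk u v} (hp : p.IsPath)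
    (hmax : ∀ (u' v' : V) (q : G.Walk u' v'), q.IsPath → q.length ≤ p.length) {x : V}
    (hx : G.Adj u x) : x ∈ p.support := by
  by_contra hxp
  have := hmax _ _ (cons hx.symm p) (cons_isPath_iff _ _ |>.mpr ⟨hp, hxp⟩)
  simp at this

theorem IsPath.exists_isCycle_of_forall_length_le [Fintype V] [DecidableRel G.Adj]
    {p : G.Walk u v} (hp : p.IsPath)
    (hmax : ∀ (u' v' : V) (q : G.Walk u' v'), q.IsPath → q.length ≤ p.length)
    (hdeg : Fintype.card V ≤ G.degree u + G.degree v) (hu₂ : 2 ≤ G.degree u) :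
    ∃ c : G.Walk u u, c.IsCycle ∧ c.length = p.length + 1 ∧
      ∀ x, x ∈ c.support ↔ x ∈ p.support := by
  have hu (x : V) : G.Adj u x → x ∈ p.support := hp.mem_support_of_adj_of_forall_length_le hmax
  have hv (x : V) (hx : G.Adj v x) : x ∈ p.support := by
    simpa using hp.reverse.mem_support_of_adj_of_forall_length_le (by simpa using hmax) hx
  obtain ⟨i, hi, hui, hvi⟩ := hp.exists_adj_getVert_succ_adj_getVert hu hv hdeg
  exact hp.exists_isCycle_of_adj_getVert_succ_adj_getVert hi
    (hu₂.trans (hp.degree_le_length hu)) hui hvi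

end Walk

end SimpleGraph

/-- Dirac's theorem: any graph on at least 3 vertices with minimum degree at least `v(G)/2`
contains a Hamilton cycle. -/
theorem stmt11 {V : Type*} [Fintype V] [DecidableEq V] (G : SimpleGraph V) [DecidableRel G.Adj]
    (h3 : 3 ≤ Fintype.card V) (hδ : (Fintype.card V : ℝ) / 2 ≤ (G.minDegree : ℝ)) :
    G.IsHamiltonian := by
  have hdeg (x : V) : Fintype.card V ≤ 2 * G.degree x := by
    have : (Fintype.card V : ℝ) ≤ 2 * G.degree x := by
      linarith [(Nat.cast_le (α := ℝ)).mpr (G.minDegree_le_degree x)]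
    exact_mod_cast this
  have : Nonempty V := Fintype.card_pos_iff.mp (by omega)
  obtain ⟨u, v, p, hp, hmax⟩ := G.exists_isPath_forall_length_le
  obtain ⟨c, hc, hclen, hcp⟩ := hp.exists_isCycle_of_forall_length_le hmax
    (by linarith [hdeg u, hdeg v]) (by linarith [hdeg u])
  have hall (x : V) : x ∈ p.support := by
    by_contra hx
    obtain ⟨z, hz, y, hy, hzy⟩ := SimpleGraph.exists_adj_of_mem_of_notMem
      (fun x y _ _ => by linarith [hdeg x, hdeg y]) (s := {x | x ∈ c.support})
      c.start_mem_support (by simpa [hcp] using hx)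
    obtain ⟨_, q, hq, hqlen⟩ := hc.exists_isPath_length_eq hy hz hzy
    linarith [hmax _ _ q hq]
  intro _
  refine ⟨u, c, SimpleGraph.Walk.isHamiltonianCycle_iff_isCycle_and_length_eq.mpr ⟨hc, ?_⟩⟩
  have := (hp.isHamiltonian_of_mem hall).length_eq
  omega
end

section
/- Let H be a graph with vertex partition V(H) = U ∪ V, where every vertex of H[V] has at least 0.9·|V| neighbours in V and |U| ≤ 0.1·|V|, and U is covered by an absorbable system of vertex-disjoint paths of length at most 2 attached to distinct vertices of V. Then for any two distinct vertices x, y ∈ V(H) and any ℓ with 6 ≤ ℓ ≤ 2v(H)/3, H contains an xy-path of length ℓ. -/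
/-!
Every vertex of `U` lies on one of the paths `aᵢ — Pᵢ — bᵢ`, which have length at most 4 and meet
`V` only in their ends. Walking along such a path to a suitable end attaches `x₀` and `y₀` to `V` by
vertex-disjoint tails of total length at most 4: a vertex of `U` uses the nearer end, or the end
other than `y₀` when `y₀ ∈ V`, and two vertices on the same path leave it through opposite ends.
The ends of the tails are then joined inside `V` by a path of the remaining length, at least 2.
Such a path is built greedily: step to a fresh neighbour until two edges are left, then close
through a common neighbour. Minimum degree `0.9|V|` makes this possible for every length up to
about `0.8|V|`, which exceeds `2v(H)/3` since `|U| ≤ 0.1|V|`.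
-/

open Finset

namespace SimpleGraph

variable {α : Type*} {G : SimpleGraph α} {W : Finset α} {u v w x y : α}

namespace Walk

theorem IsPath.append_of_forall_eq {p : G.Walk u v} {q : G.Walk v w} (hp : p.IsPath)
    (hq : q.IsPath) (h : ∀ z ∈ p.support, z ∈ q.support → z = v) : (p.append q).IsPath := by
  rw [isPath_def] at hp ⊢
  rw [isPath_def, ← cons_tail_support, List.nodup_cons] at hq
  rw [support_append]
  exact hp.append hq.2 fun z hzp hzq => hq.1 (h z hzp (List.mem_of_mem_tail hzq) ▸ hzq)

structure IsPathEndingIn (W : Finset α) (p : G.Walk u v) : Prop where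
  isPath : p.IsPath
  end_mem : v ∈ W
  eq_end_of_mem : ∀ z ∈ p.support, z ∈ W → z = v

theorem isPathEndingIn_nil (hx : x ∈ W) : (nil : G.Walk x x).IsPathEndingIn W :=
  ⟨.nil, hx, by simp⟩

theorem IsPathEndingIn.isPath_append_append_reverse {tx : G.Walk x u} {ty : G.Walk y v}
    (htx : tx.IsPathEndingIn W) (hty : ty.IsPathEndingIn W)
    (hdisj : tx.support.Disjoint ty.support) {mid : G.Walk u v} (hmid : mid.IsPath)
    (hmidW : ∀ z ∈ mid.support, z ∈ W) : (tx.append (mid.append ty.reverse)).IsPath := by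
  refine htx.isPath.append_of_forall_eq
    (hmid.append_of_forall_eq hty.isPath.reverse fun z hzm hzy => ?_) fun z hzx hz => ?_
  · rw [support_reverse, List.mem_reverse] at hzy
    exact hty.eq_end_of_mem z hzy (hmidW z hzm)
  · rw [mem_support_append_iff, support_reverse, List.mem_reverse] at hz
    exact hz.elim (fun hzm => htx.eq_end_of_mem z hzx (hmidW z hzm))
      fun hzy => (hdisj hzx hzy).elim

end Walk

open Walk

def HasDisjointTails (G : SimpleGraph α) (W : Finset α) (x y : α) (n : ℕ) : Prop :=
  ∃ u v, ∃ (tx : G.Walk x u) (ty : G.Walk y v), tx.IsPathEndingIn W ∧ ty.IsPathEndingIn W ∧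
    tx.support.Disjoint ty.support ∧ tx.length + ty.length ≤ n

theorem HasDisjointTails.symm {n : ℕ} (h : G.HasDisjointTails W x y n) :
    G.HasDisjointTails W y x n := by
  obtain ⟨u, v, tx, ty, htx, hty, hdisj, hlen⟩ := h
  exact ⟨v, u, ty, tx, hty, htx, hdisj.symm, by omega⟩

theorem HasDisjointTails.mono {n m : ℕ} (h : G.HasDisjointTails W x y n) (hnm : n ≤ m) :
    G.HasDisjointTails W x y m := by
  obtain ⟨u, v, tx, ty, htx, hty, hdisj, hlen⟩ := h
  exact ⟨u, v, tx, ty, htx, hty, hdisj, hlen.trans hnm⟩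

theorem hasDisjointTails_of_mem (hx : x ∈ W) (hy : y ∈ W) (hxy : x ≠ y) :
    G.HasDisjointTails W x y 0 :=
  ⟨x, y, nil, nil, isPathEndingIn_nil hx, isPathEndingIn_nil hy, by simpa using hxy.symm, le_rfl⟩

theorem Walk.IsPathEndingIn.hasDisjointTails_nil {c : α} {t : G.Walk x c}
    (ht : t.IsPathEndingIn W) (hy : y ∈ W) (hcy : c ≠ y) : G.HasDisjointTails W x y t.length :=
  ⟨c, y, t, nil, ht, isPathEndingIn_nil hy,
    by simpa using fun hyt => hcy (ht.eq_end_of_mem y hyt hy).symm, le_rfl⟩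

variable [DecidableEq α]

namespace Walk

theorem length_takeUntil_add_length_dropUntil (p : G.Walk u v) (hw : w ∈ p.support) :
    (p.takeUntil w hw).length + (p.dropUntil w hw).length = p.length := by
  rw [← length_append, take_spec]

theorem mem_support_takeUntil_or_mem_support_dropUntil (p : G.Walk u v) (hw : w ∈ p.support)
    (hx : x ∈ p.support) :
    x ∈ (p.takeUntil w hw).support ∨ x ∈ (p.dropUntil w hw).support := by
  rwa [← mem_support_append_iff, take_spec]

theorem mem_support_dropUntil_or_mem_support_dropUntil (p : G.Walk u v) (hx : x ∈ p.support)
    (hy : y ∈ p.support) (hxy : x ≠ y) :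
    y ∈ (p.dropUntil x hx).support ∨ x ∈ (p.dropUntil y hy).support := by
  refine (p.mem_support_takeUntil_or_mem_support_dropUntil hx hy).symm.imp_right fun hyx => ?_
  exact (p.mem_support_takeUntil_or_mem_support_dropUntil hy hx).resolve_left
    (notMem_support_takeUntil_support_takeUntil_subset hxy.symm hx hyx)

theorem IsPath.eq_of_mem_support_takeUntil_of_mem_support_dropUntil {p : G.Walk u v}
    (hp : p.IsPath) (hw : w ∈ p.support) (hx : x ∈ (p.takeUntil w hw).support)
    (hx' : x ∈ (p.dropUntil w hw).support) : x = w := by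
  by_contra hxw
  have happ : ((p.takeUntil w hw).append (p.dropUntil w hw)).IsPath := by rwa [take_spec]
  exact happ.ne_of_mem_support_of_append hxw hx hx' rfl

section EndsIn

variable {a b z : α} {Q : G.Walk a b}

theorem IsPath.isPathEndingIn_reverse_takeUntil (hQ : Q.IsPath) (ha : a ∈ W)
    (hQW : ∀ z ∈ Q.support, z ∈ W → z = a ∨ z = b) (hz : z ∈ Q.support) (hzb : z ≠ b) :
    (Q.takeUntil z hz).reverse.IsPathEndingIn W where
  isPath := (hQ.takeUntil hz).reverse
  end_mem := ha
  eq_end_of_mem t ht htW := by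
    rw [support_reverse, List.mem_reverse] at ht
    refine (hQW t (Q.support_takeUntil_subset_support hz ht) htW).resolve_right ?_
    rintro rfl
    exact endpoint_notMem_support_takeUntil hQ hz hzb.symm ht

theorem IsPath.isPathEndingIn_dropUntil (hQ : Q.IsPath) (hb : b ∈ W)
    (hQW : ∀ z ∈ Q.support, z ∈ W → z = a ∨ z = b) (hz : z ∈ Q.support) (hza : z ≠ a) :
    (Q.dropUntil z hz).IsPathEndingIn W where
  isPath := hQ.dropUntil hz
  end_mem := hb
  eq_end_of_mem t ht htW := by
    refine (hQW t (Q.support_dropUntil_subset_support hz ht) htW).resolve_left ?_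
    rintro rfl
    exact hza (hQ.eq_of_mem_support_takeUntil_of_mem_support_dropUntil hz
      (Q.takeUntil z hz).start_mem_support ht).symm

theorem IsPath.exists_isPathEndingIn_ne (hQ : Q.IsPath) (ha : a ∈ W) (hb : b ∈ W) (hab : a ≠ b)
    (hQW : ∀ z ∈ Q.support, z ∈ W → z = a ∨ z = b) (hz : z ∈ Q.support) (hzW : z ∉ W) (f : α) :
    ∃ c, ∃ t : G.Walk z c, t.IsPathEndingIn W ∧ c ≠ f ∧ t.length < Q.length := by
  have hza : z ≠ a := fun h => hzW (h ▸ ha)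
  have hzb : z ≠ b := fun h => hzW (h ▸ hb)
  by_cases haf : a = f
  · exact ⟨b, _, hQ.isPathEndingIn_dropUntil hb hQW hz hza, haf ▸ hab.symm,
      length_dropUntil_lt_length hz hza⟩
  · exact ⟨a, _, hQ.isPathEndingIn_reverse_takeUntil ha hQW hz hzb, haf,
      (length_reverse _).trans_lt (length_takeUntil_lt_length hz hzb)⟩

theorem IsPath.exists_isPathEndingIn_two_mul_length_le (hQ : Q.IsPath) (ha : a ∈ W)
    (hb : b ∈ W) (hQW : ∀ z ∈ Q.support, z ∈ W → z = a ∨ z = b) (hz : z ∈ Q.support)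
    (hzW : z ∉ W) :
    ∃ c, ∃ t : G.Walk z c, t.IsPathEndingIn W ∧ t.support ⊆ Q.support ∧
      2 * t.length ≤ Q.length := by
  have hza : z ≠ a := fun h => hzW (h ▸ ha)
  have hzb : z ≠ b := fun h => hzW (h ▸ hb)
  have hsum := Q.length_takeUntil_add_length_dropUntil hz
  by_cases h : (Q.takeUntil z hz).length ≤ (Q.dropUntil z hz).length
  · refine ⟨a, _, hQ.isPathEndingIn_reverse_takeUntil ha hQW hz hzb, ?_, ?_⟩
    · simpa [support_reverse] using Q.support_takeUntil_subset_support hz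
    · rw [length_reverse]
      omega
  · exact ⟨b, _, hQ.isPathEndingIn_dropUntil hb hQW hz hza,
      Q.support_dropUntil_subset_support hz, by omega⟩

theorem IsPath.hasDisjointTails_of_mem_support_dropUntil (hQ : Q.IsPath) (ha : a ∈ W)
    (hb : b ∈ W) (hQW : ∀ z ∈ Q.support, z ∈ W → z = a ∨ z = b) (hx : x ∈ Q.support)
    (hxW : x ∉ W) (hy : y ∈ (Q.dropUntil x hx).support) (hxy : x ≠ y) :
    G.HasDisjointTails W x y Q.length := by
  have hD := hQ.isPathEndingIn_dropUntil hb hQW hx fun h => hxW (h ▸ ha)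
  have hty := hD.isPath.isPathEndingIn_dropUntil hb
    (fun z hz hzW => .inr (hD.eq_end_of_mem z hz hzW)) hy hxy.symm
  refine ⟨a, b, _, _, hQ.isPathEndingIn_reverse_takeUntil ha hQW hx fun h => hxW (h ▸ hb), hty,
    fun z hzx hzy => ?_, ?_⟩
  · rw [support_reverse, List.mem_reverse] at hzx
    obtain rfl := hQ.eq_of_mem_support_takeUntil_of_mem_support_dropUntil hx hzx
      ((Q.dropUntil x hx).support_dropUntil_subset_support hy hzy)
    exact hxy (hD.isPath.eq_of_mem_support_takeUntil_of_mem_support_dropUntil hy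
      (start_mem_support _) hzy)
  · have := (Q.dropUntil x hx).length_dropUntil_le_length hy
    have := Q.length_takeUntil_add_length_dropUntil hx
    rw [length_reverse]
    omega

theorem IsPath.hasDisjointTails (hQ : Q.IsPath) (ha : a ∈ W) (hb : b ∈ W)
    (hQW : ∀ z ∈ Q.support, z ∈ W → z = a ∨ z = b) (hx : x ∈ Q.support) (hxW : x ∉ W)
    (hy : y ∈ Q.support) (hyW : y ∉ W) (hxy : x ≠ y) :
    G.HasDisjointTails W x y Q.length := by
  rcases Q.mem_support_dropUntil_or_mem_support_dropUntil hx hy hxy with h | h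
  · exact hQ.hasDisjointTails_of_mem_support_dropUntil ha hb hQW hx hxW h hxy
  · exact (hQ.hasDisjointTails_of_mem_support_dropUntil ha hb hQW hy hyW h hxy.symm).symm

end EndsIn

end Walk

theorem hasDisjointTails_of_cover {ι : Type*} {a b : ι → α} (Q : ∀ i, G.Walk (a i) (b i))
    (hQ : ∀ i, (Q i).IsPath) (hlen : ∀ i, (Q i).length ≤ 4) (ha : ∀ i, a i ∈ W)
    (hb : ∀ i, b i ∈ W) (hab : ∀ i, a i ≠ b i)
    (hQW : ∀ i, ∀ z ∈ (Q i).support, z ∈ W → z = a i ∨ z = b i)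
    (hdisj : Pairwise fun i j ↦ (Q i).support.Disjoint (Q j).support)
    (hcover : ∀ z ∉ W, ∃ i, z ∈ (Q i).support) (hxy : x ≠ y) :
    G.HasDisjointTails W x y 4 := by
  have one_outside : ∀ {x y}, x ∉ W → y ∈ W → G.HasDisjointTails W x y 4 := by
    intro x y hxW hyW
    obtain ⟨i, hi⟩ := hcover x hxW
    obtain ⟨c, t, ht, hcy, hlt⟩ :=
      (hQ i).exists_isPathEndingIn_ne (ha i) (hb i) (hab i) (hQW i) hi hxW y
    exact (ht.hasDisjointTails_nil hyW hcy).mono (by have := hlen i; omega)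
  by_cases hxW : x ∈ W <;> by_cases hyW : y ∈ W
  · exact (hasDisjointTails_of_mem hxW hyW hxy).mono (Nat.zero_le _)
  · exact (one_outside hyW hxW).symm
  · exact one_outside hxW hyW
  obtain ⟨i, hi⟩ := hcover x hxW
  obtain ⟨j, hj⟩ := hcover y hyW
  by_cases hij : i = j
  · subst hij
    exact ((hQ i).hasDisjointTails (ha i) (hb i) (hQW i) hi hxW hj hyW hxy).mono (hlen i)
  · obtain ⟨u, tx, htx, hsx, hlx⟩ :=
      (hQ i).exists_isPathEndingIn_two_mul_length_le (ha i) (hb i) (hQW i) hi hxW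
    obtain ⟨v, ty, hty, hsy, hly⟩ :=
      (hQ j).exists_isPathEndingIn_two_mul_length_le (ha j) (hb j) (hQW j) hj hyW
    refine ⟨u, v, tx, ty, htx, hty, fun z hzx hzy => hdisj hij (hsx hzx) (hsy hzy), ?_⟩
    have := hlen i
    have := hlen j
    omega

theorem hasDisjointTails_of_attached_paths {ι : Type*} {s t a b : ι → α}
    (p : ∀ i, G.Walk (s i) (t i)) (hp : ∀ i, (p i).IsPath) (hlen : ∀ i, (p i).length ≤ 2)
    (hpW : ∀ i, ∀ z ∈ (p i).support, z ∉ W) (hcover : ∀ z ∉ W, ∃ i, z ∈ (p i).support)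
    (hdisj : Pairwise fun i j ↦ (p i).support.Disjoint (p j).support)
    (ha : ∀ i, a i ∈ W) (hb : ∀ i, b i ∈ W) (hainj : a.Injective) (hbinj : b.Injective)
    (hab : ∀ i j, a i ≠ b j) (has : ∀ i, G.Adj (a i) (s i)) (hbt : ∀ i, G.Adj (b i) (t i))
    (hxy : x ≠ y) : G.HasDisjointTails W x y 4 := by
  have hmem : ∀ i z, z ∈ (((p i).cons (has i)).concat (hbt i).symm).support ↔
      z = a i ∨ z ∈ (p i).support ∨ z = b i := by
    simp [support_concat]
  refine hasDisjointTails_of_cover (fun i => ((p i).cons (has i)).concat (hbt i).symm)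
    (fun i => ((hp i).cons fun h => hpW i _ h (ha i)).concat ?_ _) (fun i => ?_) ha hb
    (fun i => hab i i) (fun i z hz hzW => ?_) (fun i j hij z hzi hzj => ?_)
    (fun z hz => ?_) hxy
  · simpa using ⟨(hab i i).symm, fun h => hpW i _ h (hb i)⟩
  · have := hlen i
    simp only [length_concat, length_cons]
    omega
  · rcases (hmem i z).1 hz with h | h | h
    exacts [.inl h, (hpW i z h hzW).elim, .inr h]
  · rcases (hmem i z).1 hzi with rfl | h | rfl <;> rcases (hmem j _).1 hzj with h' | h' | h'
    exacts [hij (hainj h'), hpW j _ h' (ha i), hab i j h', hpW i z h (h' ▸ ha j),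
      hdisj hij h h', hpW i z h (h' ▸ hb j), hab j i h'.symm, hpW j _ h' (hb i), hij (hbinj h')]
  · obtain ⟨i, hi⟩ := hcover z hz
    exact ⟨i, (hmem i z).2 (.inr (.inl hi))⟩

/-- Removing the first vertex from `W` lowers each degree into `W` by at most one, which keeps the
bound `k + #W + 1 ≤ 2 * D` alive; at `k = 2` that bound forces a common neighbour. -/
theorem exists_isPath_length_of_le_card_filter_adj [DecidableRel G.Adj] {D : ℕ}
    (hD : ∀ v ∈ W, D ≤ #(W.filter (G.Adj v))) {k : ℕ} (hk : 2 ≤ k) (hkW : k + #W + 1 ≤ 2 * D)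
    (hu : u ∈ W) (hv : v ∈ W) (huv : u ≠ v) :
    ∃ q : G.Walk u v, q.IsPath ∧ q.length = k ∧ ∀ z ∈ q.support, z ∈ W := by
  induction k, hk using Nat.le_induction generalizing W D u with
  | base =>
    obtain ⟨w, hw⟩ : (W.filter (G.Adj u) ∩ W.filter (G.Adj v)).Nonempty :=
      inter_nonempty_of_card_lt_card_add_card (filter_subset _ _) (filter_subset _ _)
        (by have := hD u hu; have := hD v hv; omega)
    rw [mem_inter, mem_filter, mem_filter] at hw
    obtain ⟨hwu, hwv⟩ := hw
    refine ⟨cons hwu.2 (cons hwv.2.symm nil), ?_, rfl, ?_⟩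
    · simp [cons_isPath_iff, huv, hwu.2.ne, hwv.2.ne']
    · simp [hu, hv, hwu.1]
  | succ k hk ih =>
    obtain ⟨w, hw⟩ : ((W.filter (G.Adj u)).erase v).Nonempty := by
      rw [← card_pos]
      have := hD u hu
      have := pred_card_le_card_erase (s := W.filter (G.Adj u)) (a := v)
      omega
    rw [mem_erase, mem_filter] at hw
    obtain ⟨hwv, hwW, huw⟩ := hw
    have hD' : ∀ z ∈ W.erase u, D - 1 ≤ #((W.erase u).filter (G.Adj z)) := fun z hz => by
      rw [filter_erase]
      have := hD z (mem_of_mem_erase hz)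
      have := pred_card_le_card_erase (s := W.filter (G.Adj z)) (a := u)
      omega
    obtain ⟨q, hq, hqk, hqW⟩ := ih hD'
      (by rw [card_erase_of_mem hu]; have := card_pos.2 ⟨u, hu⟩; omega)
      (mem_erase.2 ⟨huw.ne', hwW⟩) (mem_erase.2 ⟨huv.symm, hv⟩) hwv
    refine ⟨cons huw q, hq.cons fun hu' => (mem_erase.1 (hqW u hu')).1 rfl, by simp [hqk], ?_⟩
    simpa [hu] using fun z hz => mem_of_mem_erase (hqW z hz)

theorem HasDisjointTails.exists_isPath_length [DecidableRel G.Adj] {D n ℓ : ℕ}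
    (h : G.HasDisjointTails W x y n) (hD : ∀ v ∈ W, D ≤ #(W.filter (G.Adj v)))
    (hℓ : n + 2 ≤ ℓ) (hℓW : ℓ + #W + 1 ≤ 2 * D) :
    ∃ q : G.Walk x y, q.IsPath ∧ q.length = ℓ := by
  obtain ⟨u, v, tx, ty, htx, hty, hdisj, hlen⟩ := h
  have huv : u ≠ v := fun huv => hdisj tx.end_mem_support (huv ▸ ty.end_mem_support)
  obtain ⟨mid, hmid, hmidlen, hmidW⟩ := exists_isPath_length_of_le_card_filter_adj hD
    (k := ℓ - (tx.length + ty.length)) (by omega) (by omega) htx.end_mem hty.end_mem huv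
  refine ⟨_, htx.isPath_append_append_reverse hty hdisj hmid hmidW, ?_⟩
  simp only [length_append, length_reverse]
  omega

end SimpleGraph

open SimpleGraph

/-- Absorption lemma (connectivity): with the same setup as the pancyclicity lemma
(partition `U ∪ V`, minimum degree `0.9|V|` inside `V`, `|U| ≤ 0.1|V|`, and `U` covered by
an absorbable system of vertex-disjoint paths of length at most 2 attached to distinct
vertices of `V`), for any distinct vertices `x₀, y₀` and any `6 ≤ ℓ ≤ 2 v(H)/3`, `H`
contains an `x₀y₀`-path of length exactly `ℓ`. -/
theorem stmt14 {α : Type*} [Fintype α] [DecidableEq α] (H : SimpleGraph α) [DecidableRel H.Adj]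
    (U V : Finset α) (hUV : Disjoint U V) (hunion : U ∪ V = Finset.univ)
    (hdeg : ∀ v ∈ V, (0.9 : ℝ) * V.card ≤ ((V.filter (H.Adj v)).card : ℝ))
    (hU : (U.card : ℝ) ≤ (0.1 : ℝ) * V.card)
    (m : ℕ) (x y : Fin m → α) (p : ∀ i, H.Walk (x i) (y i))
    (hpath : ∀ i, (p i).IsPath) (hlen : ∀ i, (p i).length ≤ 2)
    (hsupU : ∀ w : α, w ∈ U ↔ ∃ i, w ∈ (p i).support)
    (hdisj : ∀ i j, i ≠ j → ∀ w, w ∈ (p i).support → w ∉ (p j).support)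
    (a b : Fin m → α)
    (haV : ∀ i, a i ∈ V) (hbV : ∀ i, b i ∈ V)
    (hainj : Function.Injective a) (hbinj : Function.Injective b)
    (hab : ∀ i j, a i ≠ b j)
    (hadja : ∀ i, H.Adj (a i) (x i)) (hadjb : ∀ i, H.Adj (b i) (y i)) :
    ∀ x₀ y₀ : α, x₀ ≠ y₀ → ∀ ℓ : ℕ, 6 ≤ ℓ → (ℓ : ℝ) ≤ 2 * (Fintype.card α : ℝ) / 3 →
      ∃ q : H.Walk x₀ y₀, q.IsPath ∧ q.length = ℓ := by
  intro x₀ y₀ hne ℓ hℓ hℓcard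
  have hpV : ∀ i, ∀ z ∈ (p i).support, z ∉ V := fun i z hz =>
    disjoint_left.1 hUV ((hsupU z).2 ⟨i, hz⟩)
  have hcover : ∀ z ∉ V, ∃ i, z ∈ (p i).support := fun z hz =>
    (hsupU z).1 <| (mem_union.1 (hunion ▸ mem_univ z)).resolve_right hz
  have htails := hasDisjointTails_of_attached_paths p hpath hlen hpV hcover
    (fun i j hij z => hdisj i j hij z) haV hbV hainj hbinj hab hadja hadjb hne
  -- `(9 * #V + 9) / 10 = ⌈0.9 * #V⌉`
  refine htails.exists_isPath_length (D := (9 * #V + 9) / 10) (fun v hv => ?_) (by omega) ?_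
  · have : (9 * #V : ℝ) ≤ 10 * #(V.filter (H.Adj v)) := by linarith [hdeg v hv]
    have : 9 * #V ≤ 10 * #(V.filter (H.Adj v)) := by exact_mod_cast this
    omega
  · have hcard : Fintype.card α = #U + #V := by
      rw [← card_univ, ← hunion, card_union_of_disjoint hUV]
    have : 10 * #U ≤ #V := by exact_mod_cast (by linarith : (10 * #U : ℝ) ≤ #V)
    have : 3 * ℓ ≤ 2 * (#U + #V) := by
      exact_mod_cast (by rw [hcard] at hℓcard; push_cast at hℓcard; linarith :
        (3 * ℓ : ℝ) ≤ 2 * (#U + #V))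
    omega
end

section
/- In the special case x, y ∈ V: if H[V] has minimum degree at least 0.9·|V| (within V), then for any distinct x, y ∈ V and any ℓ with 2 ≤ ℓ ≤ 2|V|/3, the graph H[V] contains an xy-path of length exactly ℓ. -/
/-!
Any two vertices have at least `0.8|V|` common neighbours, which exceeds `ℓ`. Grow a path
backwards from `y`, avoiding `x`, by repeatedly prepending a common neighbour of the current
head and `x` that is not yet on the path; after `ℓ - 1` steps the head is adjacent to `x`,
and prepending `x` closes an `xy`-path of length `ℓ`.
-/

namespace SimpleGraph

open Finset

variable {V : Type*} [Fintype V] [DecidableEq V] {G : SimpleGraph V} [DecidableRel G.Adj]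

lemma degree_add_degree_le_card_inter_add_card (a b : V) :
    G.degree a + G.degree b ≤ #(G.neighborFinset a ∩ G.neighborFinset b) + Fintype.card V := by
  rw [← card_neighborFinset_eq_degree, ← card_neighborFinset_eq_degree,
    ← Finset.card_inter_add_card_union]
  exact Nat.add_le_add_left (Finset.card_le_univ _) _

lemma Walk.exists_cons_common_neighbor {x v y : V} (q : G.Walk v y) (hq : q.IsPath)
    (hx : x ∉ q.support) (hcard : q.length + 1 < #(G.neighborFinset v ∩ G.neighborFinset x)) :
    ∃ (w : V) (q' : G.Walk w y), q'.IsPath ∧ q'.length = q.length + 1 ∧ x ∉ q'.support ∧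
      G.Adj x w := by
  have hsupport : #q.support.toFinset < #(G.neighborFinset v ∩ G.neighborFinset x) :=
    calc #q.support.toFinset ≤ q.support.length := List.toFinset_card_le _
      _ = q.length + 1 := q.length_support
      _ < _ := hcard
  obtain ⟨w, hw, hwq⟩ := Finset.exists_mem_notMem_of_card_lt_card hsupport
  rw [Finset.mem_inter, mem_neighborFinset, mem_neighborFinset] at hw
  rw [List.mem_toFinset] at hwq
  refine ⟨w, cons hw.1.symm q, hq.cons hwq, rfl, ?_, hw.2⟩
  rw [support_cons, List.mem_cons, not_or]
  exact ⟨G.ne_of_adj hw.2, hx⟩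

lemma exists_path_avoiding_of_lt_card_inter {x y : V} (hxy : x ≠ y) (k : ℕ)
    (hcommon : ∀ a, k < #(G.neighborFinset a ∩ G.neighborFinset x)) :
    ∃ (v : V) (q : G.Walk v y), q.IsPath ∧ q.length = k ∧ x ∉ q.support := by
  induction k with
  | zero => exact ⟨y, .nil, .nil, rfl, by simpa using hxy⟩
  | succ k ih =>
    obtain ⟨v, q, hq, rfl, hx⟩ := ih fun a ↦ (Nat.lt_succ_self _).trans (hcommon a)
    obtain ⟨w, q', hq', hlen, hx', -⟩ := q.exists_cons_common_neighbor hq hx (hcommon v)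
    exact ⟨w, q', hq', hlen, hx'⟩

theorem exists_path_length_of_le_card_inter {x y : V} (hxy : x ≠ y) {ℓ : ℕ} (hℓ : 2 ≤ ℓ)
    (hcommon : ∀ a, ℓ ≤ #(G.neighborFinset a ∩ G.neighborFinset x)) :
    ∃ p : G.Walk x y, p.IsPath ∧ p.length = ℓ := by
  obtain ⟨v, q, hq, hlen, hx⟩ :=
    exists_path_avoiding_of_lt_card_inter (G := G) hxy (ℓ - 2) fun a ↦ by
      have := hcommon a; omega
  obtain ⟨w, q', hq', hlen', hx', hxw⟩ :=
    q.exists_cons_common_neighbor hq hx (by have := hcommon v; omega)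
  exact ⟨.cons hxw q', hq'.cons hx', by rw [Walk.length_cons]; omega⟩

end SimpleGraph

/-- If every vertex of a graph `G` on vertex set `V` has at least `0.9|V|` neighbours,
then for any distinct `x, y` and any `2 ≤ ℓ ≤ 2|V|/3`, `G` contains an `xy`-path of
length exactly `ℓ`. -/
theorem stmt15 {V : Type*} [Fintype V] [DecidableEq V] (G : SimpleGraph V) [DecidableRel G.Adj]
    (hdeg : ∀ v : V, (0.9 : ℝ) * (Fintype.card V : ℝ) ≤ (G.degree v : ℝ))
    (x y : V) (hxy : x ≠ y) (ℓ : ℕ) (h2 : 2 ≤ ℓ)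
    (hup : (ℓ : ℝ) ≤ 2 * (Fintype.card V : ℝ) / 3) :
    ∃ p : G.Walk x y, p.IsPath ∧ p.length = ℓ := by
  refine SimpleGraph.exists_path_length_of_le_card_inter hxy h2 fun a ↦ ?_
  have hsum : (G.degree a + G.degree x : ℝ)
      ≤ (G.neighborFinset a ∩ G.neighborFinset x).card + Fintype.card V := by
    exact_mod_cast SimpleGraph.degree_add_degree_le_card_inter_add_card a x
  have hcommon : (ℓ : ℝ) ≤ (G.neighborFinset a ∩ G.neighborFinset x).card := by
    linarith [hdeg a, hdeg x, (Fintype.card V).cast_nonneg (α := ℝ)]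
  exact_mod_cast hcommon
end

section
/- For every ε ∈ (0,1), for sufficiently large n, the random graph G(N, p) with N = 2n·log n and p = 3(log log n)/(n-1) satisfies, with positive probability, both: (a) G has no independent set of size n, and (b) G has at most N/2 cycles of length at most (1-ε)·(log n)/(log log n). -/
open scoped Classical

/-- The probability that the binomial random graph `G(N,p)` equals a fixed graph `G`:
each of the `C(N,2)` potential edges is present independently with probability `p`. -/
noncomputable def gnpWeight (N : ℕ) (p : ℝ) (G : SimpleGraph (Fin N)) : ℝ :=
  p ^ (Nat.card G.edgeSet) * (1 - p) ^ (N.choose 2 - Nat.card G.edgeSet)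

open Finset

namespace Stmt16Aux


variable {α : Type*} [DecidableEq α]

lemma sum_pow_filter (U A B : Finset α) (hA : A ⊆ U) (hB : B ⊆ U)
    (hAB : Disjoint A B) (p : ℝ) :
    ∑ s ∈ U.powerset.filter (fun s => A ⊆ s ∧ Disjoint s B),
      p ^ s.card * (1 - p) ^ (U.card - s.card) = p ^ A.card * (1 - p) ^ B.card := by
  have h2 : B ⊆ U \ A := subset_sdiff.2 ⟨hB, hAB.symm⟩
  set W := (U \ A) \ B with hWdef
  have hWcard : W.card + A.card + B.card = U.card := by
    have h1 : (U \ A).card = U.card - A.card := card_sdiff_of_subset hA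
    have h3 : W.card = (U \ A).card - B.card := card_sdiff_of_subset h2
    have h4 : A.card ≤ U.card := card_le_card hA
    have h5 : B.card ≤ (U \ A).card := card_le_card h2
    omega
  have key : ∑ s ∈ U.powerset.filter (fun s => A ⊆ s ∧ Disjoint s B),
      p ^ s.card * (1 - p) ^ (U.card - s.card)
      = ∑ t ∈ W.powerset, p ^ (A.card + t.card) * (1 - p) ^ (B.card + (W.card - t.card)) := by
    refine Finset.sum_nbij' (i := fun s => s \ A) (j := fun t => A ∪ t) ?_ ?_ ?_ ?_ ?_
    · intro s hs
      simp only [mem_filter, mem_powerset] at hs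
      obtain ⟨hsU, hAs, hsB⟩ := hs
      exact mem_powerset.2 (subset_sdiff.2 ⟨subset_sdiff.2 ⟨sdiff_subset.trans hsU, disjoint_sdiff_self_left⟩, hsB.mono_left sdiff_subset⟩)
    · intro t ht
      simp only [mem_powerset] at ht
      have htB : Disjoint t B := Finset.sdiff_disjoint.mono_left ht
      refine mem_filter.2 ⟨mem_powerset.2 ?_, subset_union_left, ?_⟩
      · exact union_subset hA ((ht.trans sdiff_subset).trans sdiff_subset)
      · exact Finset.disjoint_union_left.mpr ⟨hAB, htB⟩
    · intro s hs
      simp only [mem_filter, mem_powerset] at hs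
      exact union_sdiff_of_subset hs.2.1
    · intro t ht
      simp only [mem_powerset] at ht
      have hAt : Disjoint A t := Finset.disjoint_sdiff.mono_right (ht.trans sdiff_subset)
      exact union_sdiff_cancel_left hAt
    · intro s hs
      simp only [mem_filter, mem_powerset] at hs
      have hcard : s.card = A.card + (s \ A).card := by
        have := card_sdiff_add_card_eq_card hs.2.1
        omega
      have hsub : (s \ A) ⊆ W := subset_sdiff.2 ⟨subset_sdiff.2 ⟨sdiff_subset.trans hs.1, disjoint_sdiff_self_left⟩, hs.2.2.mono_left sdiff_subset⟩
      have h6 : (s \ A).card ≤ W.card := card_le_card hsub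
      have h7 : s.card ≤ U.card := card_le_card hs.1
      congr 1
      · rw [hcard]
      · congr 1
        omega
  rw [key]
  have : ∀ t ∈ W.powerset, p ^ (A.card + t.card) * (1 - p) ^ (B.card + (W.card - t.card))
      = (p ^ A.card * (1 - p) ^ B.card) * (p ^ t.card * (1 - p) ^ (W.card - t.card)) := by
    intro t _; rw [pow_add, pow_add]; ring
  rw [Finset.sum_congr rfl this, ← Finset.mul_sum, Finset.sum_pow_mul_eq_add_pow]
  simp

noncomputable def gnpWeight' (N : ℕ) (p : ℝ) (G : SimpleGraph (Fin N)) : ℝ :=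
  p ^ (Nat.card G.edgeSet) * (1 - p) ^ (N.choose 2 - Nat.card G.edgeSet)

variable {N : ℕ} {p : ℝ}

/-- the universe of potential edges -/
noncomputable def EU (N : ℕ) : Finset (Sym2 (Fin N)) :=
  Finset.univ.filter (fun e => ¬ e.IsDiag)

lemma card_EU (N : ℕ) : (EU N).card = N.choose 2 := by
  rw [EU, ← Fintype.card_subtype]
  simpa using Sym2.card_subtype_not_diag (α := Fin N)

lemma edgeFinset_subset_EU (G : SimpleGraph (Fin N)) : G.edgeFinset ⊆ EU N := by
  intro e he
  rw [SimpleGraph.mem_edgeFinset] at he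
  exact Finset.mem_filter.2 ⟨Finset.mem_univ _, G.not_isDiag_of_mem_edgeSet he⟩

lemma nat_card_edgeSet (G : SimpleGraph (Fin N)) : Nat.card G.edgeSet = G.edgeFinset.card := by
  rw [Nat.card_eq_fintype_card, SimpleGraph.edgeFinset, Set.toFinset_card]

lemma gnpWeight'_eq (G : SimpleGraph (Fin N)) :
    gnpWeight' N p G = p ^ G.edgeFinset.card * (1 - p) ^ ((EU N).card - G.edgeFinset.card) := by
  rw [gnpWeight', nat_card_edgeSet, card_EU]

lemma transfer (F : Finset (Sym2 (Fin N)) → ℝ) :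
    ∑ G : SimpleGraph (Fin N), F G.edgeFinset = ∑ s ∈ (EU N).powerset, F s := by
  refine Finset.sum_nbij' (i := fun G => G.edgeFinset) (j := fun s => SimpleGraph.fromEdgeSet ↑s)
    ?_ ?_ ?_ ?_ ?_
  · intro G _; exact mem_powerset.2 (edgeFinset_subset_EU G)
  · intro s _; exact mem_univ _
  · intro G _
    simp [SimpleGraph.fromEdgeSet_edgeSet]
  · intro s hs
    have hnd : ∀ e ∈ s, ¬ Sym2.IsDiag e := by
      intro e he
      have := mem_powerset.1 hs he
      exact (Finset.mem_filter.1 this).2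
    apply Finset.coe_injective
    rw [SimpleGraph.coe_edgeFinset, SimpleGraph.edgeSet_fromEdgeSet]
    ext e
    simp only [Set.mem_diff, Finset.mem_coe, Set.mem_setOf_eq]
    exact ⟨fun h => h.1, fun h => ⟨h, hnd e h⟩⟩
  · intro G _; rfl

/-- sum over graphs whose edge set contains `A` and avoids `B` -/
lemma sum_graphs_cond (A B : Finset (Sym2 (Fin N))) (hA : A ⊆ EU N) (hB : B ⊆ EU N)
    (hAB : Disjoint A B) :
    ∑ G ∈ Finset.univ.filter
        (fun G : SimpleGraph (Fin N) => A ⊆ G.edgeFinset ∧ Disjoint G.edgeFinset B),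
      gnpWeight' N p G = p ^ A.card * (1 - p) ^ B.card := by
  rw [Finset.sum_filter]
  set F : Finset (Sym2 (Fin N)) → ℝ := fun s => if A ⊆ s ∧ Disjoint s B then
          p ^ s.card * (1 - p) ^ ((EU N).card - s.card) else 0 with hF
  have h1 : ∀ G ∈ (Finset.univ : Finset (SimpleGraph (Fin N))),
      (if A ⊆ G.edgeFinset ∧ Disjoint G.edgeFinset B then gnpWeight' N p G else 0)
      = F G.edgeFinset := by
    intro G _
    by_cases h : A ⊆ G.edgeFinset ∧ Disjoint G.edgeFinset B
    · simp only [hF, if_pos h, gnpWeight'_eq]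
    · simp only [hF, if_neg h]
  calc (∑ G : SimpleGraph (Fin N), if A ⊆ G.edgeFinset ∧ Disjoint G.edgeFinset B then gnpWeight' N p G else 0)
      = ∑ G : SimpleGraph (Fin N), F G.edgeFinset := Finset.sum_congr rfl h1
    _ = ∑ s ∈ (EU N).powerset, F s := transfer F
    _ = p ^ A.card * (1 - p) ^ B.card := by
        rw [hF, ← Finset.sum_filter]
        exact sum_pow_filter (EU N) A B hA hB hAB p

lemma sum_graphs_total :
    ∑ G : SimpleGraph (Fin N), gnpWeight' N p G = 1 := by
  have := sum_graphs_cond (N := N) (p := p) ∅ ∅ (Finset.empty_subset _) (Finset.empty_subset _)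
    (Finset.disjoint_empty_left _)
  simpa using this

lemma sum_union_le {β : Type*} [DecidableEq β] (A B : Finset β) (f : β → ℝ)
    (hf : ∀ b, 0 ≤ f b) : ∑ b ∈ A ∪ B, f b ≤ ∑ b ∈ A, f b + ∑ b ∈ B, f b := by
  rw [← Finset.union_sdiff_self_eq_union, Finset.sum_union Finset.disjoint_sdiff]
  exact add_le_add_right
    (Finset.sum_le_sum_of_subset_of_nonneg Finset.sdiff_subset (fun b _ _ => hf b)) _

lemma sum_biUnion_le' {ι β : Type*} [DecidableEq β] (I : Finset ι) (T : ι → Finset β)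
    (f : β → ℝ) (hf : ∀ b, 0 ≤ f b) :
    ∑ b ∈ I.biUnion T, f b ≤ ∑ i ∈ I, ∑ b ∈ T i, f b := by
  classical
  induction I using Finset.induction_on with
  | empty => simp
  | insert a I' hnotmem ih =>
    rw [Finset.biUnion_insert, Finset.sum_insert hnotmem]
    exact (sum_union_le _ _ f hf).trans (by gcongr)

lemma union_bound {ι β : Type*} [DecidableEq β] (I : Finset ι) (T : ι → Finset β)
    (S : Finset β) (f : β → ℝ) (hf : ∀ b, 0 ≤ f b) (hS : ∀ b ∈ S, ∃ i ∈ I, b ∈ T i) :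
    ∑ b ∈ S, f b ≤ ∑ i ∈ I, ∑ b ∈ T i, f b := by
  classical
  have h1 : ∑ b ∈ S, f b ≤ ∑ b ∈ I.biUnion T, f b := by
    apply Finset.sum_le_sum_of_subset_of_nonneg _ (fun b _ _ => hf b)
    intro b hb
    obtain ⟨i, hi, hbi⟩ := hS b hb
    exact Finset.mem_biUnion.2 ⟨i, hi, hbi⟩
  exact h1.trans (sum_biUnion_le' I T f hf)

/-- potential edges inside a vertex set -/
noncomputable def Bset {N : ℕ} (s : Finset (Fin N)) : Finset (Sym2 (Fin N)) :=
  s.offDiag.image (Function.uncurry Sym2.mk)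

lemma Bset_card {N : ℕ} (s : Finset (Fin N)) : (Bset s).card = s.card.choose 2 :=
  Sym2.card_image_offDiag s

lemma Bset_subset_EU {N : ℕ} (s : Finset (Fin N)) : Bset s ⊆ EU N := by
  intro e he
  obtain ⟨⟨a, b⟩, hab, rfl⟩ := Finset.mem_image.1 he
  rw [Finset.mem_offDiag] at hab
  exact Finset.mem_filter.2 ⟨Finset.mem_univ _, by simp [Sym2.isDiag_iff_proj_eq, hab.2.2]⟩

lemma indep_iff {N : ℕ} (G : SimpleGraph (Fin N)) (s : Finset (Fin N)) :
    (∀ u ∈ s, ∀ v ∈ s, u ≠ v → ¬ G.Adj u v) ↔ Disjoint G.edgeFinset (Bset s) := by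
  rw [Finset.disjoint_right]
  constructor
  · intro h e he hedge
    obtain ⟨⟨a, b⟩, hab, rfl⟩ := Finset.mem_image.1 he
    rw [Finset.mem_offDiag] at hab
    rw [SimpleGraph.mem_edgeFinset] at hedge
    exact h a hab.1 b hab.2.1 hab.2.2 hedge
  · intro h u hu v hv huv hadj
    have he : s(u, v) ∈ Bset s := Finset.mem_image.2 ⟨(u, v), Finset.mem_offDiag.2 ⟨hu, hv, huv⟩, rfl⟩
    exact h he (by rwa [SimpleGraph.mem_edgeFinset, SimpleGraph.mem_edgeSet])

lemma bad1_bound {N n : ℕ} {p : ℝ} (hp0 : 0 ≤ p) (hp1 : p ≤ 1) :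
    ∑ G ∈ Finset.univ.filter (fun G : SimpleGraph (Fin N) =>
        ¬ (∀ s : Finset (Fin N), (∀ u ∈ s, ∀ v ∈ s, u ≠ v → ¬ G.Adj u v) → s.card < n)),
      gnpWeight' N p G ≤ (N.choose n : ℝ) * (1 - p) ^ (n.choose 2) := by
  have hw : ∀ G : SimpleGraph (Fin N), 0 ≤ gnpWeight' N p G := by
    intro G
    exact mul_nonneg (pow_nonneg hp0 _) (pow_nonneg (by linarith) _)
  have step := union_bound (Finset.powersetCard n (Finset.univ : Finset (Fin N)))
    (fun s => Finset.univ.filter (fun G : SimpleGraph (Fin N) =>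
      Disjoint G.edgeFinset (Bset s)))
    (Finset.univ.filter (fun G : SimpleGraph (Fin N) =>
        ¬ (∀ s : Finset (Fin N), (∀ u ∈ s, ∀ v ∈ s, u ≠ v → ¬ G.Adj u v) → s.card < n)))
    (gnpWeight' N p) hw ?_
  · refine step.trans ?_
    have heach : ∀ s ∈ Finset.powersetCard n (Finset.univ : Finset (Fin N)),
        ∑ G ∈ Finset.univ.filter (fun G : SimpleGraph (Fin N) =>
          Disjoint G.edgeFinset (Bset s)), gnpWeight' N p G = (1 - p) ^ (n.choose 2) := by
      intro s hs
      have hcard : s.card = n := (Finset.mem_powersetCard.1 hs).2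
      have h := sum_graphs_cond (N := N) (p := p) ∅ (Bset s) (Finset.empty_subset _)
        (Bset_subset_EU s) (Finset.disjoint_empty_left _)
      simp only [Finset.empty_subset, true_and, Finset.card_empty, pow_zero, one_mul] at h
      rw [h, Bset_card, hcard]
    rw [Finset.sum_congr rfl heach, Finset.sum_const, Finset.card_powersetCard,
      Finset.card_univ, Fintype.card_fin, nsmul_eq_mul]
  · intro G hG
    rw [Finset.mem_filter] at hG
    push_neg at hG
    obtain ⟨s, hindep, hcard⟩ := hG.2
    obtain ⟨t, hts, htcard⟩ := Finset.exists_subset_card_eq hcard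
    refine ⟨t, Finset.mem_powersetCard.2 ⟨Finset.subset_univ _, htcard⟩, ?_⟩
    rw [Finset.mem_filter]
    exact ⟨Finset.mem_univ _, (indep_iff G t).1
      (fun u hu v hv huv => hindep u (hts hu) v (hts hv) huv)⟩

section cycles
open SimpleGraph

variable {N : ℕ} {G : SimpleGraph (Fin N)}

/-- cyclic function representations of cycles in G -/
noncomputable def CycFun (ℓ N : ℕ) (G : SimpleGraph (Fin N)) : Finset (Fin ℓ → Fin N) :=
  Finset.univ.filter (fun f => Function.Injective f ∧ ∀ i, G.Adj (f i) (f (finRotate ℓ i)))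

noncomputable def fOf (Hs : G.Subgraph) {ℓ : ℕ} (e : Hs.coe ≃g cycleGraph ℓ)
    (i : Fin ℓ) : Fin N := ((e.symm i : Hs.verts) : Fin N)

lemma subgraph_verts_eq (Hs : G.Subgraph) {ℓ : ℕ} (e : Hs.coe ≃g cycleGraph ℓ) :
    Hs.verts = Set.range (fOf Hs e) := by
  ext a
  constructor
  · intro ha
    exact ⟨e ⟨a, ha⟩, by simp [fOf]⟩
  · rintro ⟨i, rfl⟩
    exact (e.symm i).2

lemma subgraph_adj_iff (Hs : G.Subgraph) {ℓ : ℕ} (e : Hs.coe ≃g cycleGraph ℓ) (a b : Fin N) :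
    Hs.Adj a b ↔ ∃ i j, (cycleGraph ℓ).Adj i j ∧ a = fOf Hs e i ∧ b = fOf Hs e j := by
  constructor
  · intro h
    refine ⟨e ⟨a, h.fst_mem⟩, e ⟨b, h.snd_mem⟩, ?_, by simp [fOf], by simp [fOf]⟩
    rw [Iso.map_adj_iff]
    exact h
  · rintro ⟨i, j, hij, rfl, rfl⟩
    have : Hs.coe.Adj (e.symm i) (e.symm j) := (Iso.map_adj_iff e.symm).mpr hij
    exact this

lemma cycleGraph_adj_succ {m : ℕ} (i : Fin (m + 3)) :
    (cycleGraph (m + 3)).Adj i (finRotate (m + 3) i) := by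
  rw [finRotate_succ_apply]
  refine (cycleGraph_adj (n := m + 1)).mpr (Or.inr ?_)
  exact add_sub_cancel_left i 1

lemma fOf_mem (Hs : G.Subgraph) {ℓ : ℕ} (hℓ : 3 ≤ ℓ) (e : Hs.coe ≃g cycleGraph ℓ) :
    fOf Hs e ∈ CycFun ℓ N G := by
  refine Finset.mem_filter.2 ⟨Finset.mem_univ _, ?_, ?_⟩
  · exact Subtype.val_injective.comp (e.symm.toEquiv.injective)
  · obtain ⟨m, rfl⟩ : ∃ m, ℓ = m + 3 := ⟨ℓ - 3, by omega⟩
    intro i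
    have hadj : Hs.Adj (fOf Hs e i) (fOf Hs e (finRotate (m + 3) i)) :=
      (subgraph_adj_iff Hs e (fOf Hs e i) (fOf Hs e (finRotate (m + 3) i))).2
        ⟨i, finRotate (m + 3) i, cycleGraph_adj_succ i, rfl, rfl⟩
    exact hadj.adj_sub

lemma subgraph_eq_of_fOf {ℓ : ℕ} (Hs₁ Hs₂ : G.Subgraph) (e₁ : Hs₁.coe ≃g cycleGraph ℓ)
    (e₂ : Hs₂.coe ≃g cycleGraph ℓ) (hf : fOf Hs₁ e₁ = fOf Hs₂ e₂) : Hs₁ = Hs₂ := by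
  apply SimpleGraph.Subgraph.ext
  · rw [subgraph_verts_eq Hs₁ e₁, subgraph_verts_eq Hs₂ e₂, hf]
  · ext a b
    rw [subgraph_adj_iff Hs₁ e₁, subgraph_adj_iff Hs₂ e₂, hf]

lemma subgraph_eq_of_fOf_heq {ℓ₁ ℓ₂ : ℕ} (h : ℓ₁ = ℓ₂) (Hs₁ Hs₂ : G.Subgraph)
    (e₁ : Hs₁.coe ≃g cycleGraph ℓ₁) (e₂ : Hs₂.coe ≃g cycleGraph ℓ₂)
    (hf : HEq (fOf Hs₁ e₁) (fOf Hs₂ e₂)) : Hs₁ = Hs₂ := by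
  subst h
  exact subgraph_eq_of_fOf Hs₁ Hs₂ e₁ e₂ (eq_of_heq hf)

lemma count_cycles_le (Lr : ℝ) (G : SimpleGraph (Fin N)) :
    Nat.card {Hs : G.Subgraph // ∃ ℓ : ℕ, 3 ≤ ℓ ∧ (ℓ : ℝ) ≤ Lr ∧
        Nonempty (Hs.coe ≃g cycleGraph ℓ)}
      ≤ ∑ ℓ ∈ Finset.Icc 3 ⌊Lr⌋₊, (CycFun ℓ N G).card := by
  classical
  set M := ⌊Lr⌋₊ with hM
  set S := (Finset.Icc 3 M).sigma (fun ℓ => CycFun ℓ N G) with hS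
  have key : Nat.card {Hs : G.Subgraph // ∃ ℓ : ℕ, 3 ≤ ℓ ∧ (ℓ : ℝ) ≤ Lr ∧
      Nonempty (Hs.coe ≃g cycleGraph ℓ)} ≤ Nat.card S := by
    have hΦ : ∀ x : {Hs : G.Subgraph // ∃ ℓ : ℕ, 3 ≤ ℓ ∧ (ℓ : ℝ) ≤ Lr ∧
        Nonempty (Hs.coe ≃g cycleGraph ℓ)},
        ∃ y : S, (y : Σ ℓ : ℕ, Fin ℓ → Fin N).1 = Classical.choose x.2 ∧
          HEq (y : Σ ℓ : ℕ, Fin ℓ → Fin N).2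
            (fOf x.1 (Classical.choice (Classical.choose_spec x.2).2.2)) := by
      intro x
      obtain ⟨h3, hL, hne⟩ := Classical.choose_spec x.2
      refine ⟨⟨⟨Classical.choose x.2, fOf x.1 (Classical.choice hne)⟩, ?_⟩, rfl, ?_⟩
      · refine Finset.mem_sigma.2 ⟨Finset.mem_Icc.2 ⟨h3, Nat.le_floor hL⟩, fOf_mem x.1 h3 _⟩
      · rfl
    choose Φ hΦ1 hΦ2 using hΦ
    apply Nat.card_le_card_of_injective Φ
    intro x y hxy
    have hv : (Φ x : Σ ℓ : ℕ, Fin ℓ → Fin N) = (Φ y : Σ ℓ : ℕ, Fin ℓ → Fin N) :=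
      congrArg Subtype.val hxy
    have h1 : Classical.choose x.2 = Classical.choose y.2 :=
      (hΦ1 x).symm.trans ((congrArg Sigma.fst hv).trans (hΦ1 y))
    have h2' : HEq (Φ x : Σ ℓ : ℕ, Fin ℓ → Fin N).2 (Φ y : Σ ℓ : ℕ, Fin ℓ → Fin N).2 := by
      rw [hv]
    have h2 := ((hΦ2 x).symm.trans h2').trans (hΦ2 y)
    exact Subtype.ext (subgraph_eq_of_fOf_heq h1 x.1 y.1 _ _ h2)
  rw [Nat.card_eq_finsetCard, hS, Finset.card_sigma] at key
  exact key


noncomputable def Af {ℓ N : ℕ} (f : Fin ℓ → Fin N) : Finset (Sym2 (Fin N)) :=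
  Finset.image (fun i => s(f i, f (finRotate ℓ i))) Finset.univ

lemma af_ne {m N : ℕ} {f : Fin (m + 3) → Fin N} (hf : Function.Injective f) (i : Fin (m + 3)) :
    f i ≠ f (finRotate (m + 3) i) := by
  intro h
  have := hf h
  rw [finRotate_succ_apply] at this
  have h2 : (1 : Fin (m + 3)) = 0 := by
    have := (left_eq_add).mp this
    exact this
  have := congrArg Fin.val h2
  simp at this

lemma Af_subset_EU {m N : ℕ} (f : Fin (m + 3) → Fin N) (hf : Function.Injective f) :
    Af f ⊆ EU N := by
  intro e he
  obtain ⟨i, _, rfl⟩ := Finset.mem_image.1 he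
  have h := af_ne hf i
  rw [finRotate_succ_apply] at h
  exact Finset.mem_filter.2 ⟨Finset.mem_univ _, by
    simp [Sym2.isDiag_iff_proj_eq, finRotate_succ_apply, h]⟩

lemma Af_card {m N : ℕ} (f : Fin (m + 3) → Fin N) (hf : Function.Injective f) :
    (Af f).card = m + 3 := by
  rw [Af, Finset.card_image_of_injective _ ?_, Finset.card_univ, Fintype.card_fin]
  intro i j hij
  rw [Sym2.eq_iff] at hij
  rcases hij with ⟨h1, _⟩ | ⟨h1, h2⟩
  · exact hf h1
  · -- f i = f (j+1), f (i+1) = f j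
    have hij1 : i = finRotate (m + 3) j := hf h1
    have hij2 : finRotate (m + 3) i = j := hf h2
    rw [finRotate_succ_apply] at hij1 hij2
    have : i = i + 1 + 1 := by rw [← hij2] at hij1; exact hij1
    exfalso
    have h5 : (1 : Fin (m + 3)) + 1 = 0 := by
      have h0 : i + (1 + 1) = i + 0 := by rw [← add_assoc, ← this, add_zero]
      exact add_left_cancel h0
    have h6 := congrArg Fin.val h5
    rw [Fin.val_add, Fin.val_zero] at h6
    have h7 : (1 : Fin (m + 3)).val = 1 := rfl
    rw [h7, Nat.mod_eq_of_lt (by omega)] at h6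
    omega

lemma mem_cycFun_iff {m N : ℕ} (G : SimpleGraph (Fin N)) (f : Fin (m + 3) → Fin N)
    (hf : Function.Injective f) :
    f ∈ CycFun (m + 3) N G ↔ Af f ⊆ G.edgeFinset := by
  rw [CycFun, Finset.mem_filter]
  constructor
  · rintro ⟨-, -, hadj⟩ e he
    obtain ⟨i, -, rfl⟩ := Finset.mem_image.1 he
    rw [SimpleGraph.mem_edgeFinset, SimpleGraph.mem_edgeSet]
    exact hadj i
  · intro h
    refine ⟨Finset.mem_univ _, hf, fun i => ?_⟩
    have : s(f i, f (finRotate (m + 3) i)) ∈ G.edgeFinset :=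
      h (Finset.mem_image.2 ⟨i, Finset.mem_univ _, rfl⟩)
    rwa [SimpleGraph.mem_edgeFinset, SimpleGraph.mem_edgeSet] at this

lemma cyc_expectation {N : ℕ} {p : ℝ} (hp0 : 0 ≤ p) {ℓ : ℕ} (hℓ : 3 ≤ ℓ) :
    ∑ G : SimpleGraph (Fin N), gnpWeight' N p G * ((CycFun ℓ N G).card : ℝ)
      ≤ (N : ℝ) ^ ℓ * p ^ ℓ := by
  obtain ⟨m, rfl⟩ : ∃ m, ℓ = m + 3 := ⟨ℓ - 3, by omega⟩
  have h1 : ∀ G : SimpleGraph (Fin N), gnpWeight' N p G * ((CycFun (m + 3) N G).card : ℝ)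
      = ∑ f : Fin (m + 3) → Fin N,
          if f ∈ CycFun (m + 3) N G then gnpWeight' N p G else 0 := by
    intro G
    rw [← Finset.sum_filter, Finset.filter_univ_mem, Finset.sum_const, nsmul_eq_mul, mul_comm]
  rw [Finset.sum_congr rfl (fun G _ => h1 G), Finset.sum_comm]
  have h2 : ∀ f : Fin (m + 3) → Fin N,
      (∑ G : SimpleGraph (Fin N), if f ∈ CycFun (m + 3) N G then gnpWeight' N p G else 0)
        ≤ p ^ (m + 3) := by
    intro f
    rw [← Finset.sum_filter]
    by_cases hf : Function.Injective f
    · have hco : Finset.univ.filter (fun G : SimpleGraph (Fin N) => f ∈ CycFun (m + 3) N G)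
          = Finset.univ.filter (fun G : SimpleGraph (Fin N) =>
              Af f ⊆ G.edgeFinset ∧ Disjoint G.edgeFinset (∅ : Finset (Sym2 (Fin N)))) := by
        apply Finset.filter_congr
        intro G _
        rw [mem_cycFun_iff G f hf]
        simp
      rw [hco, sum_graphs_cond (Af f) ∅ (Af_subset_EU f hf) (Finset.empty_subset _)
        (Finset.disjoint_empty_right _), Af_card f hf]
      simp
    · have hco : Finset.univ.filter (fun G : SimpleGraph (Fin N) => f ∈ CycFun (m + 3) N G)
          = ∅ := by
        apply Finset.filter_false_of_mem
        intro G _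
        rw [CycFun, Finset.mem_filter]
        tauto
      rw [hco, Finset.sum_empty]
      exact pow_nonneg hp0 _
  calc (∑ f : Fin (m + 3) → Fin N, ∑ G : SimpleGraph (Fin N),
        if f ∈ CycFun (m + 3) N G then gnpWeight' N p G else 0)
      ≤ ∑ _f : Fin (m + 3) → Fin N, p ^ (m + 3) := Finset.sum_le_sum (fun f _ => h2 f)
    _ = (N : ℝ) ^ (m + 3) * p ^ (m + 3) := by
        rw [Finset.sum_const, nsmul_eq_mul, Finset.card_univ, Fintype.card_fun,
          Fintype.card_fin, Fintype.card_fin, Nat.cast_pow]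

end cycles

open SimpleGraph in
lemma main_prob {N n : ℕ} (p L : ℝ) (hp0 : 0 ≤ p) (hp1 : p ≤ 1) (hNpos : 0 < (N : ℝ))
    (hA : (N.choose n : ℝ) * (1 - p) ^ (n.choose 2) ≤ 1 / 4)
    (hB : ∑ ℓ ∈ Finset.Icc 3 ⌊L⌋₊, (N : ℝ) ^ ℓ * p ^ ℓ ≤ (N : ℝ) / 8) :
    0 < ∑ G ∈ Finset.univ.filter (fun G : SimpleGraph (Fin N) =>
          (∀ s : Finset (Fin N), (∀ u ∈ s, ∀ v ∈ s, u ≠ v → ¬ G.Adj u v) → s.card < n) ∧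
          ((Nat.card {Hs : G.Subgraph // ∃ ℓ : ℕ, 3 ≤ ℓ ∧ (ℓ : ℝ) ≤ L ∧
              Nonempty (Hs.coe ≃g SimpleGraph.cycleGraph ℓ)} : ℝ) ≤ (N : ℝ) / 2)),
        gnpWeight' N p G := by
  classical
  set w := gnpWeight' N p with hw
  have hwnn : ∀ G : SimpleGraph (Fin N), 0 ≤ w G :=
    fun G => mul_nonneg (pow_nonneg hp0 _) (pow_nonneg (by linarith) _)
  set PA : SimpleGraph (Fin N) → Prop := fun G =>
    ∀ s : Finset (Fin N), (∀ u ∈ s, ∀ v ∈ s, u ≠ v → ¬ G.Adj u v) → s.card < n with hPA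
  set cnt : SimpleGraph (Fin N) → ℝ := fun G =>
    (Nat.card {Hs : G.Subgraph // ∃ ℓ : ℕ, 3 ≤ ℓ ∧ (ℓ : ℝ) ≤ L ∧
        Nonempty (Hs.coe ≃g SimpleGraph.cycleGraph ℓ)} : ℝ) with hcnt
  set PB : SimpleGraph (Fin N) → Prop := fun G => cnt G ≤ (N : ℝ) / 2 with hPB
  -- expectation bound
  have hcnt_le : ∀ G : SimpleGraph (Fin N),
      cnt G ≤ ∑ ℓ ∈ Finset.Icc 3 ⌊L⌋₊, ((CycFun ℓ N G).card : ℝ) := by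
    intro G
    have := count_cycles_le L G
    calc cnt G ≤ ((∑ ℓ ∈ Finset.Icc 3 ⌊L⌋₊, (CycFun ℓ N G).card : ℕ) : ℝ) := by
          show ((Nat.card _ : ℕ) : ℝ) ≤ _
          exact_mod_cast this
      _ = ∑ ℓ ∈ Finset.Icc 3 ⌊L⌋₊, ((CycFun ℓ N G).card : ℝ) := by push_cast; ring
  have hexp : ∑ G : SimpleGraph (Fin N), w G * cnt G ≤ (N : ℝ) / 8 := by
    calc ∑ G : SimpleGraph (Fin N), w G * cnt G
        ≤ ∑ G : SimpleGraph (Fin N),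
            ∑ ℓ ∈ Finset.Icc 3 ⌊L⌋₊, w G * ((CycFun ℓ N G).card : ℝ) := by
          apply Finset.sum_le_sum
          intro G _
          rw [← Finset.mul_sum]
          exact mul_le_mul_of_nonneg_left (hcnt_le G) (hwnn G)
      _ = ∑ ℓ ∈ Finset.Icc 3 ⌊L⌋₊,
            ∑ G : SimpleGraph (Fin N), w G * ((CycFun ℓ N G).card : ℝ) := Finset.sum_comm
      _ ≤ ∑ ℓ ∈ Finset.Icc 3 ⌊L⌋₊, (N : ℝ) ^ ℓ * p ^ ℓ := by
          apply Finset.sum_le_sum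
          intro ℓ hℓ
          exact cyc_expectation hp0 (Finset.mem_Icc.1 hℓ).1
      _ ≤ (N : ℝ) / 8 := hB
  -- Markov
  have hbad2 : ∑ G ∈ Finset.univ.filter (fun G => ¬ PB G), w G ≤ 1 / 4 := by
    have hcnt_nn : ∀ G : SimpleGraph (Fin N), 0 ≤ cnt G := fun G => Nat.cast_nonneg _
    have h1 : (∑ G ∈ Finset.univ.filter (fun G => ¬ PB G), w G) * ((N : ℝ) / 2)
        ≤ ∑ G : SimpleGraph (Fin N), w G * cnt G := by
      rw [Finset.sum_mul]
      calc ∑ G ∈ Finset.univ.filter (fun G => ¬ PB G), w G * ((N : ℝ) / 2)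
          ≤ ∑ G ∈ Finset.univ.filter (fun G => ¬ PB G), w G * cnt G := by
            apply Finset.sum_le_sum
            intro G hG
            have := (Finset.mem_filter.1 hG).2
            simp only [hPB, not_le] at this
            exact mul_le_mul_of_nonneg_left this.le (hwnn G)
        _ ≤ ∑ G : SimpleGraph (Fin N), w G * cnt G :=
            Finset.sum_le_sum_of_subset_of_nonneg (Finset.subset_univ _)
              (fun G _ _ => mul_nonneg (hwnn G) (hcnt_nn G))
    have h2 : (∑ G ∈ Finset.univ.filter (fun G => ¬ PB G), w G) * ((N : ℝ) / 2)
        ≤ (N : ℝ) / 8 := h1.trans hexp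
    have hhalf : 0 < (N : ℝ) / 2 := by positivity
    rw [← le_div_iff₀ hhalf] at h2
    calc ∑ G ∈ Finset.univ.filter (fun G => ¬ PB G), w G
        ≤ ((N : ℝ) / 8) / ((N : ℝ) / 2) := h2
      _ = 1 / 4 := by field_simp; ring
  have hbad1 : ∑ G ∈ Finset.univ.filter (fun G => ¬ PA G), w G ≤ 1 / 4 :=
    (bad1_bound hp0 hp1).trans hA
  -- assembly
  have htotal : ∑ G : SimpleGraph (Fin N), w G = 1 := sum_graphs_total
  have hsplit : ∑ G ∈ Finset.univ.filter (fun G => PA G ∧ PB G), w G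
      + ∑ G ∈ Finset.univ.filter (fun G => ¬ (PA G ∧ PB G)), w G = 1 := by
    rw [Finset.sum_filter_add_sum_filter_not]
    exact htotal
  have hbad : ∑ G ∈ Finset.univ.filter (fun G => ¬ (PA G ∧ PB G)), w G ≤ 1 / 2 := by
    have hsub : Finset.univ.filter (fun G : SimpleGraph (Fin N) => ¬ (PA G ∧ PB G))
        ⊆ Finset.univ.filter (fun G => ¬ PA G) ∪ Finset.univ.filter (fun G => ¬ PB G) := by
      intro G hG
      have := (Finset.mem_filter.1 hG).2
      rw [Finset.mem_union, Finset.mem_filter, Finset.mem_filter]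
      by_cases h : PA G
      · exact Or.inr ⟨Finset.mem_univ _, fun hb => this ⟨h, hb⟩⟩
      · exact Or.inl ⟨Finset.mem_univ _, h⟩
    calc ∑ G ∈ Finset.univ.filter (fun G => ¬ (PA G ∧ PB G)), w G
        ≤ ∑ G ∈ (Finset.univ.filter (fun G : SimpleGraph (Fin N) => ¬ PA G)
            ∪ Finset.univ.filter (fun G => ¬ PB G)), w G :=
          Finset.sum_le_sum_of_subset_of_nonneg hsub (fun G _ _ => hwnn G)
      _ ≤ ∑ G ∈ Finset.univ.filter (fun G : SimpleGraph (Fin N) => ¬ PA G), w G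
            + ∑ G ∈ Finset.univ.filter (fun G => ¬ PB G), w G := sum_union_le _ _ _ hwnn
      _ ≤ 1 / 2 := by linarith
  have : (1 : ℝ) / 2 ≤ ∑ G ∈ Finset.univ.filter (fun G => PA G ∧ PB G), w G := by linarith
  calc (0 : ℝ) < 1 / 2 := by norm_num
    _ ≤ _ := this

-- elementary log bounds
lemma log_le_two_sqrt {t : ℝ} (ht : 1 ≤ t) : Real.log t ≤ 2 * Real.sqrt t := by
  have h0 : (0:ℝ) < t := by linarith
  have h1 : Real.log (Real.sqrt t) ≤ Real.sqrt t - 1 :=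
    Real.log_le_sub_one_of_pos (Real.sqrt_pos.2 h0)
  rw [Real.log_sqrt h0.le] at h1
  nlinarith [Real.sqrt_nonneg t]

lemma logb_le_three_sqrt {t : ℝ} (ht : 1 ≤ t) : Real.logb 2 t ≤ 3 * Real.sqrt t := by
  rw [Real.logb, div_le_iff₀ (Real.log_pos one_lt_two)]
  have h := log_le_two_sqrt ht
  nlinarith [Real.log_two_gt_d9, Real.sqrt_nonneg t]

lemma logb_le_self' {t : ℝ} (ht : 9 ≤ t) : Real.logb 2 t ≤ t := by
  have h1 := logb_le_three_sqrt (by linarith : (1:ℝ) ≤ t)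
  have h2 : Real.sqrt t * Real.sqrt t = t := Real.mul_self_sqrt (by linarith)
  have h3 : 3 ≤ Real.sqrt t := by nlinarith [Real.sqrt_nonneg t]
  nlinarith [Real.sqrt_nonneg t]

lemma polyD {ε y sy l12 ly : ℝ} (h12 : l12 ≤ 11) (hly : ly ≤ 2 * sy)
    (hsy2 : sy * sy = y) (hεsy : 15 ≤ ε * sy) (hsy15 : 15 ≤ sy) :
    l12 + ly ≤ 0.34 * (ε * y) := by
  have hsy0 : (0:ℝ) ≤ sy := by linarith
  have hprod : 15 * sy ≤ (ε * sy) * sy := mul_le_mul_of_nonneg_right hεsy hsy0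
  nlinarith [hprod]

lemma polyB {ε x y l2 A : ℝ} (hx0 : 0 < x) (hy0 : 0 < y) (hε0 : 0 < ε) (hε1 : ε < 1)
    (hA0 : 0 ≤ A) (hD : A ≤ 0.34 * (ε * y)) (hεx : 4 ≤ ε * x)
    (hl2a : 0.6931 < l2) :
    (A + y * l2) * ((1 - ε) * x) ≤ (x * l2 - 2 * l2) * y := by
  have s1 : 0.34 * (ε * x) + 2 * l2 ≤ (ε * x) * l2 := by
    nlinarith [mul_le_mul_of_nonneg_right hεx (show (0:ℝ) ≤ l2 - 0.34 by linarith)]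
  have s1y := mul_le_mul_of_nonneg_right s1 hy0.le
  have s2 := mul_le_mul_of_nonneg_right hD hx0.le
  have t : 0 ≤ ε * x * A := by positivity
  nlinarith [s1y, s2, t]

set_option maxHeartbeats 2000000 in
lemma numerics (ε : ℝ) (hε0 : 0 < ε) (hε1 : ε < 1) :
    ∃ n₀ : ℕ, ∀ n : ℕ, n₀ ≤ n → ∀ N : ℕ, (N : ℝ) = 2 * n * Real.logb 2 n →
      (0 ≤ 3 * Real.logb 2 (Real.logb 2 n) / ((n:ℝ) - 1)) ∧
      (3 * Real.logb 2 (Real.logb 2 n) / ((n:ℝ) - 1) ≤ 1) ∧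
      (0 < (N:ℝ)) ∧
      ((N.choose n : ℝ) *
        (1 - 3 * Real.logb 2 (Real.logb 2 n) / ((n:ℝ) - 1)) ^ (n.choose 2) ≤ 1/4) ∧
      (∑ ℓ ∈ Finset.Icc 3 ⌊(1 - ε) * Real.logb 2 n / Real.logb 2 (Real.logb 2 n)⌋₊,
          (N:ℝ)^ℓ * (3 * Real.logb 2 (Real.logb 2 n) / ((n:ℝ) - 1))^ℓ ≤ (N:ℝ)/8) := by
  set K := max (225 / ε ^ 2) 16 with hK
  refine ⟨⌈(2:ℝ) ^ ((2:ℝ) ^ K)⌉₊ + 1, ?_⟩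
  intro n hn N hN
  set x := Real.logb 2 n with hx
  set y := Real.logb 2 x with hy
  set p := 3 * y / ((n:ℝ) - 1) with hp
  have hKK : (16:ℝ) ≤ K := le_max_right _ _
  have hKε : 225 / ε ^ 2 ≤ K := le_max_left _ _
  have hl2a : (0.6931:ℝ) < Real.log 2 := by
    have := Real.log_two_gt_d9; linarith
  have hl2b : Real.log 2 < 0.6932 := by
    have := Real.log_two_lt_d9; linarith
  have h2K : (65536:ℝ) ≤ (2:ℝ) ^ K := by
    have h1 : (2:ℝ) ^ (16:ℝ) ≤ (2:ℝ) ^ K :=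
      Real.rpow_le_rpow_of_exponent_le one_le_two hKK
    have h2 : (2:ℝ) ^ (16:ℝ) = 65536 := by
      rw [show (16:ℝ) = ((16:ℕ):ℝ) by norm_num, Real.rpow_natCast]; norm_num
    linarith
  have hceil : ((2:ℝ) ^ ((2:ℝ) ^ K)) ≤ (n:ℝ) := by
    have h1 : ((2:ℝ) ^ ((2:ℝ) ^ K)) ≤ (⌈(2:ℝ) ^ ((2:ℝ) ^ K)⌉₊ : ℝ) := Nat.le_ceil _
    have h2 : (⌈(2:ℝ) ^ ((2:ℝ) ^ K)⌉₊ : ℕ) ≤ n := by omega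
    exact h1.trans (Nat.cast_le.2 h2)
  have hn16 : (65536:ℝ) ≤ (n:ℝ) := by
    have h1 : (2:ℝ) ^ (16:ℝ) ≤ (2:ℝ) ^ ((2:ℝ) ^ K) :=
      Real.rpow_le_rpow_of_exponent_le one_le_two (by linarith)
    have h2 : (2:ℝ) ^ (16:ℝ) = 65536 := by
      rw [show (16:ℝ) = ((16:ℕ):ℝ) by norm_num, Real.rpow_natCast]; norm_num
    linarith
  have hn0 : (0:ℝ) < n := by linarith
  have hxge : (2:ℝ) ^ K ≤ x := by
    have h1 : Real.logb 2 ((2:ℝ) ^ ((2:ℝ) ^ K)) ≤ Real.logb 2 n :=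
      Real.logb_le_logb_of_le one_lt_two (Real.rpow_pos_of_pos two_pos _) hceil
    rwa [Real.logb_rpow two_pos (by norm_num)] at h1
  have hx16 : (65536:ℝ) ≤ x := by linarith
  have hx0 : (0:ℝ) < x := by linarith
  have hyK : K ≤ y := by
    have h1 : Real.logb 2 ((2:ℝ) ^ K) ≤ Real.logb 2 x :=
      Real.logb_le_logb_of_le one_lt_two (Real.rpow_pos_of_pos two_pos _) hxge
    rwa [Real.logb_rpow two_pos (by norm_num)] at h1
  have hy16 : (16:ℝ) ≤ y := by linarith
  have hyε : 225 / ε ^ 2 ≤ y := by linarith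
  have hy0 : (0:ℝ) < y := by linarith
  have hyx : y ≤ x := by
    have := logb_le_self' (t := x) (by linarith)
    exact this
  have hxn : x ≤ n := logb_le_self' (by linarith)
  have hsq : x ≤ 3 * Real.sqrt n := logb_le_three_sqrt (by linarith)
  have hsn : Real.sqrt n * Real.sqrt n = n := Real.mul_self_sqrt hn0.le
  have hsn30 : (30:ℝ) ≤ Real.sqrt n := by nlinarith [Real.sqrt_nonneg (n:ℝ)]
  have hn2 : (2:ℝ) ≤ n := by linarith
  have hn1 : (1:ℝ) ≤ (n:ℝ) - 1 := by linarith
  have hp0 : 0 ≤ p := by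
    rw [hp]; positivity
  have hp1 : p ≤ 1 := by
    rw [hp, div_le_one (by linarith)]
    nlinarith
  have hNpos : 0 < (N:ℝ) := by rw [hN]; positivity
  refine ⟨hp0, hp1, hNpos, ?_, ?_⟩
  · -- A bound
    have hfp : (0:ℝ) < (n.factorial : ℝ) := by exact_mod_cast n.factorial_pos
    have hnn : (0:ℝ) < (n:ℝ) ^ n := by positivity
    have h1 : (N.choose n : ℝ) ≤ (N:ℝ) ^ n / (n.factorial : ℝ) := Nat.choose_le_pow_div n N
    have h2 : ((n:ℝ)) ^ n / (n.factorial : ℝ) ≤ Real.exp n :=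
      Real.pow_div_factorial_le_exp (n:ℝ) hn0.le n
    have h2' : ((n:ℝ)) ^ n ≤ Real.exp n * (n.factorial : ℝ) := by
      rwa [div_le_iff₀ hfp] at h2
    have h3 : (N:ℝ) ^ n / (n.factorial : ℝ) ≤ (2*x) ^ n * Real.exp n := by
      rw [div_le_iff₀ hfp]
      have hNn : (N:ℝ) ^ n = (n:ℝ) ^ n * (2*x) ^ n := by
        rw [hN, show 2 * (n:ℝ) * x = (n:ℝ) * (2*x) by ring, mul_pow]
      rw [hNn]
      calc (n:ℝ) ^ n * (2*x) ^ n ≤ (Real.exp n * (n.factorial : ℝ)) * (2*x) ^ n :=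
            mul_le_mul_of_nonneg_right h2' (by positivity)
        _ = (2*x) ^ n * Real.exp n * (n.factorial : ℝ) := by ring
    have h1p : (0:ℝ) ≤ 1 - p := by linarith
    have h5 : (1 - p) ^ (n.choose 2) ≤ Real.exp (-(3/2 * n * y)) := by
      calc (1 - p) ^ (n.choose 2) ≤ (Real.exp (-p)) ^ (n.choose 2) :=
            pow_le_pow_left₀ h1p (Real.one_sub_le_exp_neg p) _
        _ = Real.exp ((n.choose 2 : ℕ) * (-p)) := (Real.exp_nat_mul _ _).symm
        _ = Real.exp (-(3/2 * n * y)) := by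
            congr 1
            rw [Nat.cast_choose_two, hp]
            have hne : (n:ℝ) - 1 ≠ 0 := by linarith
            field_simp
    have hcore : Real.log (2*x) + 2 - 3/2 * y ≤ 0 := by
      have hlx : Real.log x = y * Real.log 2 := by
        rw [hy, Real.logb]
        field_simp
      have hl2x : Real.log (2*x) = Real.log 2 + Real.log x :=
        Real.log_mul two_ne_zero hx0.ne'
      rw [hl2x, hlx]
      have hyl2 : y * Real.log 2 ≤ y * 0.6932 :=
        mul_le_mul_of_nonneg_left hl2b.le hy0.le
      linarith
    have h6 : (2*x) ^ n * Real.exp n * Real.exp (-(3/2 * n * y)) ≤ Real.exp (-(n:ℝ)) := by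
      have h2x0 : (0:ℝ) < 2 * x := by linarith
      have h7 : (2*x) ^ n = Real.exp ((n:ℝ) * Real.log (2*x)) := by
        rw [Real.exp_nat_mul, Real.exp_log h2x0]
      rw [h7, ← Real.exp_add, ← Real.exp_add, Real.exp_le_exp]
      have h11 : (n:ℝ) * (Real.log (2*x) + 2 - 3/2 * y) ≤ (n:ℝ) * 0 :=
        mul_le_mul_of_nonneg_left (by linarith [hcore]) hn0.le
      nlinarith [h11]
    have h8 : Real.exp (-(n:ℝ)) ≤ 1/4 := by
      have hexp2 : (4:ℝ) ≤ Real.exp 2 := by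
        rw [show (2:ℝ) = 1 + 1 by norm_num, Real.exp_add]
        nlinarith [Real.exp_one_gt_d9]
      have h9 : Real.exp (-(n:ℝ)) ≤ Real.exp (-2) := Real.exp_le_exp.2 (by linarith)
      have h10 : Real.exp (-2 : ℝ) = (Real.exp 2)⁻¹ := by
        rw [Real.exp_neg]
      rw [h10] at h9
      have : (Real.exp 2)⁻¹ ≤ (4:ℝ)⁻¹ := by
        apply inv_anti₀ (by norm_num) hexp2
      linarith
    calc (N.choose n : ℝ) * (1 - p) ^ (n.choose 2)
        ≤ ((2*x) ^ n * Real.exp n) * Real.exp (-(3/2 * n * y)) := by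
          apply mul_le_mul (h1.trans h3) h5 (pow_nonneg h1p _) (by positivity)
      _ ≤ Real.exp (-(n:ℝ)) := by rw [mul_assoc] at h6 ⊢; exact h6
      _ ≤ 1/4 := h8
  · -- B bound
    set L := (1 - ε) * x / y with hL
    have hε1' : (0:ℝ) < 1 - ε := by linarith
    have hL0 : 0 ≤ L := by rw [hL]; positivity
    have hq0 : (0:ℝ) < 12 * x * y := by positivity
    have h1x : (1:ℝ) ≤ x := by linarith
    have h1y : (1:ℝ) ≤ y := by linarith
    have hq1 : (1:ℝ) ≤ 12 * x * y := by
      have := mul_le_mul h1x h1y zero_le_one (by linarith : (0:ℝ) ≤ x)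
      linarith [this]
    have hne : (0:ℝ) < (n:ℝ) - 1 := by linarith
    have hNp : (N:ℝ) * p ≤ 12 * x * y := by
      have hh : 2 * (n:ℝ) * x * (3 * y / ((n:ℝ)-1)) = 6 * (n:ℝ) * x * y / ((n:ℝ)-1) := by
        field_simp; ring
      rw [hN, hp, hh, div_le_iff₀ hne]
      have hxy0 : 0 < x * y := mul_pos hx0 hy0
      have h6 := mul_le_mul_of_nonneg_right hn2 hxy0.le
      linarith [h6]
    have hNp0 : 0 ≤ (N:ℝ) * p := mul_nonneg hNpos.le hp0
    have hMle : ((⌊L⌋₊ : ℕ) : ℝ) ≤ L := Nat.floor_le hL0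
    have hterm : ∀ ℓ ∈ Finset.Icc 3 ⌊L⌋₊, (N:ℝ)^ℓ * p^ℓ ≤ (12*x*y) ^ L := by
      intro ℓ hℓ
      have hℓM : (ℓ:ℝ) ≤ L := le_trans (Nat.cast_le.2 (Finset.mem_Icc.1 hℓ).2) hMle
      calc (N:ℝ)^ℓ * p^ℓ = ((N:ℝ)*p)^ℓ := (mul_pow _ _ _).symm
        _ ≤ (12*x*y)^ℓ := pow_le_pow_left₀ hNp0 hNp ℓ
        _ = (12*x*y) ^ (ℓ:ℝ) := (Real.rpow_natCast _ ℓ).symm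
        _ ≤ (12*x*y) ^ L := Real.rpow_le_rpow_of_exponent_le hq1 hℓM
    have hLx : L ≤ x := by
      rw [hL, div_le_iff₀ hy0]
      have e1 : x * 1 ≤ x * y := mul_le_mul_of_nonneg_left h1y hx0.le
      have e2 : 0 < ε * x := mul_pos hε0 hx0
      linarith
    have hsum : ∑ ℓ ∈ Finset.Icc 3 ⌊L⌋₊, (N:ℝ)^ℓ * p^ℓ ≤ x * (12*x*y) ^ L := by
      calc ∑ ℓ ∈ Finset.Icc 3 ⌊L⌋₊, (N:ℝ)^ℓ * p^ℓ
          ≤ (Finset.Icc 3 ⌊L⌋₊).card • ((12*x*y) ^ L) := Finset.sum_le_card_nsmul _ _ _ hterm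
        _ = ((Finset.Icc 3 ⌊L⌋₊).card : ℝ) * (12*x*y) ^ L := nsmul_eq_mul _ _
        _ ≤ x * (12*x*y) ^ L := by
            apply mul_le_mul_of_nonneg_right _ (Real.rpow_nonneg hq0.le L)
            have hcard : (Finset.Icc 3 ⌊L⌋₊).card ≤ ⌊L⌋₊ := by
              rw [Nat.card_Icc]; omega
            calc ((Finset.Icc 3 ⌊L⌋₊).card : ℝ) ≤ ((⌊L⌋₊ : ℕ) : ℝ) := Nat.cast_le.2 hcard
              _ ≤ L := hMle
              _ ≤ x := hLx
    -- facts for the key log inequality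
    have hlx : Real.log x = y * Real.log 2 := by
      rw [hy, Real.logb]
      field_simp
    have hlogn : Real.log n = x * Real.log 2 := by
      rw [hx, Real.logb]
      field_simp
    have hl12 : Real.log 12 ≤ 11 := by
      have := Real.log_le_sub_one_of_pos (show (0:ℝ) < 12 by norm_num)
      linarith
    have hl12pos : 0 ≤ Real.log 12 := Real.log_nonneg (by norm_num)
    have hly : Real.log y ≤ 2 * Real.sqrt y := log_le_two_sqrt (by linarith)
    have hlypos : 0 ≤ Real.log y := Real.log_nonneg (by linarith)
    set sy := Real.sqrt y with hsy
    have hsy2 : sy * sy = y := Real.mul_self_sqrt hy0.le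
    have hsyε : 15 / ε ≤ sy := by
      have h15 : (0:ℝ) ≤ 15/ε := by positivity
      have h1 : Real.sqrt (225/ε^2) ≤ sy := Real.sqrt_le_sqrt hyε
      rwa [show (225/ε^2 : ℝ) = (15/ε)^2 by rw [div_pow]; norm_num,
        Real.sqrt_sq h15] at h1
    have hεsy : 15 ≤ ε * sy := by
      have := (div_le_iff₀ hε0).mp hsyε
      linarith
    have hsy15 : (15:ℝ) ≤ sy := by
      have h1 : (15:ℝ) ≤ 15/ε := by
        rw [le_div_iff₀ hε0]
        linarith [hε1.le]
      linarith
    have hD : Real.log 12 + Real.log y ≤ 0.34 * (ε * y) :=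
      polyD hl12 hly hsy2 hεsy hsy15
    have hxK : K * Real.log 2 ≤ x := by
      have e1 : (2:ℝ)^K = Real.exp (Real.log 2 * K) := Real.rpow_def_of_pos two_pos K
      have e2 : Real.log 2 * K + 1 ≤ Real.exp (Real.log 2 * K) := Real.add_one_le_exp _
      have e3 : Real.log 2 * K + 1 ≤ (2:ℝ)^K := by rw [e1]; exact e2
      linarith [hxge]
    have hεx : 4 ≤ ε * x := by
      have h1 : 225/ε^2 * Real.log 2 ≤ K * Real.log 2 :=
        mul_le_mul_of_nonneg_right hKε (by linarith)
      have h2 : 225/ε^2 * Real.log 2 ≤ x := by linarith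
      have h3 : ε * (225/ε^2 * Real.log 2) ≤ ε * x := mul_le_mul_of_nonneg_left h2 hε0.le
      have h4 : ε * (225/ε^2 * Real.log 2) = 225 * Real.log 2 / ε := by
        field_simp
      have h5 : (4:ℝ) ≤ 225 * Real.log 2 / ε := by
        rw [le_div_iff₀ hε0]
        linarith [hl2a, hε1.le]
      linarith [h4 ▸ h3]
    have hkey : (12*x*y) ^ L ≤ (n:ℝ)/4 := by
      rw [Real.rpow_def_of_pos hq0]
      have hlq : Real.log (12*x*y) = Real.log 12 + Real.log x + Real.log y := by
        rw [Real.log_mul (by positivity) hy0.ne', Real.log_mul (by norm_num) hx0.ne']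
      have hl4 : Real.log 4 = 2 * Real.log 2 := by
        rw [show (4:ℝ) = 2^(2:ℕ) by norm_num, Real.log_pow]
        push_cast; ring
      have hlog_goal : Real.log (12*x*y) * L ≤ Real.log ((n:ℝ)/4) := by
        rw [Real.log_div hn0.ne' (by norm_num), hlq, hlx, hlogn, hl4, hL]
        rw [mul_comm (Real.log 12 + y * Real.log 2 + Real.log y) ((1 - ε) * x / y),
          div_mul_eq_mul_div, div_le_iff₀ hy0]
        have hB := polyB (A := Real.log 12 + Real.log y) hx0 hy0 hε0 hε1
          (by linarith) hD hεx hl2a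
        linarith [hB]
      calc Real.exp (Real.log (12*x*y) * L) ≤ Real.exp (Real.log ((n:ℝ)/4)) :=
            Real.exp_le_exp.2 hlog_goal
        _ = (n:ℝ)/4 := Real.exp_log (by positivity)
    calc ∑ ℓ ∈ Finset.Icc 3 ⌊L⌋₊, (N:ℝ)^ℓ * p^ℓ
        ≤ x * (12*x*y) ^ L := hsum
      _ ≤ x * ((n:ℝ)/4) := mul_le_mul_of_nonneg_left hkey hx0.le
      _ = (N:ℝ)/8 := by rw [hN]; ring


lemma gnpWeight'_def : gnpWeight' = gnpWeight := rfl

end Stmt16Aux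

/-- For every `ε ∈ (0,1)` and sufficiently large `n`, with `N = 2 n log n` and
`p = 3 log log n / (n-1)` (logs base 2), the random graph `G(N,p)` with positive
probability simultaneously has no independent set of size `n` and at most `N/2` cycles
(cycle subgraphs) of length at most `(1-ε) log n / log log n`. -/
theorem stmt16 (ε : ℝ) (hε0 : 0 < ε) (hε1 : ε < 1) :
    ∃ n₀ : ℕ, ∀ n : ℕ, n₀ ≤ n → ∀ N : ℕ, (N : ℝ) = 2 * n * Real.logb 2 n →
      0 < ∑ G ∈ Finset.univ.filter (fun G : SimpleGraph (Fin N) =>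
            (∀ s : Finset (Fin N), (∀ u ∈ s, ∀ v ∈ s, u ≠ v → ¬ G.Adj u v) → s.card < n) ∧
            ((Nat.card {Hs : G.Subgraph // ∃ ℓ : ℕ, 3 ≤ ℓ ∧
                (ℓ : ℝ) ≤ (1 - ε) * Real.logb 2 n / Real.logb 2 (Real.logb 2 n) ∧
                Nonempty (Hs.coe ≃g SimpleGraph.cycleGraph ℓ)} : ℝ) ≤ (N : ℝ) / 2)),
          gnpWeight N (3 * Real.logb 2 (Real.logb 2 n) / ((n : ℝ) - 1)) G := by
  obtain ⟨n₀, h⟩ := Stmt16Aux.numerics ε hε0 hε1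
  refine ⟨n₀, fun n hn N hN => ?_⟩
  obtain ⟨hp0, hp1, hNpos, hA, hB⟩ := h n hn N hN
  have hmain := Stmt16Aux.main_prob (N := N) (n := n)
    (3 * Real.logb 2 (Real.logb 2 n) / ((n : ℝ) - 1))
    ((1 - ε) * Real.logb 2 n / Real.logb 2 (Real.logb 2 n)) hp0 hp1 hNpos hA hB
  rw [Stmt16Aux.gnpWeight'_def] at hmain
  exact hmain
end
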